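/- arXiv:2307.06792 — 5 statements merged into one kernel-verified Lean document; each statement's English description precedes it below -/
import Mathlib

section
/- Let b and v be binary vectors of length k, let j ∈ [k-1], and suppose that the reversal of the length-j prefix of b encodes (in big-endian binary) a number strictly smaller than that of v, while the reversal of the length-(j+1) prefix of b encodes a number strictly larger than that of v. Then b_{j+1} = 1 and v_{j+1} = 0, and there exists an index i ∈ [j] with b_i = 0, v_i = 1, and b_h = v_h for all h with i < h < j+1. -/
open Finset

/-- Big-endian binary decoding of a bit vector: `∑ i, b i · 2^(k-i)` (1-based). -/
def decodeBE (k : ℕ) (b : Fin k → Bool) : ℕ :=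
  ∑ i : Fin k, if b i then 2 ^ (k - 1 - (i : ℕ)) else 0

/-- `prefRev k i b` is the vector obtained from `b` by reversing its prefix of length `i`. -/
def prefRev (k i : ℕ) (b : Fin k → Bool) : Fin k → Bool :=
  fun h => if hh : (h : ℕ) < i ∧ i ≤ k then b ⟨i - 1 - (h : ℕ), by omega⟩ else b h

/-!
Reading its bits backwards, `decodeBE (prefRev k m b)` is `2^(k-m) · L_m(b) + T_m(b)`, where
`L_m(b) = ∑_{i<m} b_i 2^i` is the little-endian value of the first `m` bits and `T_m(b) < 2^(k-m)`
only sees the bits from position `m` on. Writing `P = 2^(k-j-1)` and `T = T_{j+1}(b)`,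
`T' = T_{j+1}(v)`, both `< P`, the two hypotheses become
`P (2 L_j(b) + b_j) + T < P (2 L_j(v) + v_j) + T'` and
`P (L_j(v) + v_j 2^j) + T' < P (L_j(b) + b_j 2^j) + T`, which forces `b_j = 1`, `v_j = 0` and
`L_j(b) < L_j(v)`. The last inequality is a colex comparison of the sets of one-bits, and `i` is
their largest point of difference.
-/

def ofBitsLE (f : ℕ → Bool) (n : ℕ) : ℕ :=
  ∑ i ∈ range n, (f i).toNat * 2 ^ i

section ofBitsLE

variable (f g : ℕ → Bool) (n : ℕ)

theorem ofBitsLE_eq_sum_filter : ofBitsLE f n = ∑ i ∈ (range n).filter (f ·), 2 ^ i := by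
  rw [sum_filter]
  exact sum_congr rfl fun i _ => by cases f i <;> simp

theorem ofBitsLE_lt_two_pow : ofBitsLE f n < 2 ^ n := by
  rw [ofBitsLE_eq_sum_filter]
  exact Nat.geomSum_lt le_rfl fun i hi => by simpa using (mem_filter.1 hi).1

theorem ofBitsLE_succ : ofBitsLE f (n + 1) = ofBitsLE f n + (f n).toNat * 2 ^ n :=
  sum_range_succ _ n

theorem ofBitsLE_add (a : ℕ) :
    ofBitsLE f (a + n) = ofBitsLE f a + 2 ^ a * ofBitsLE (fun i => f (a + i)) n := by
  simp only [ofBitsLE, sum_range_add, mul_sum, pow_add]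
  congr 1
  exact sum_congr rfl fun i _ => by ring

variable {f g n}

theorem ofBitsLE_congr (h : ∀ i < n, f i = g i) : ofBitsLE f n = ofBitsLE g n :=
  sum_congr rfl fun i hi => by rw [h i (mem_range.1 hi)]

theorem exists_lt_of_ofBitsLE_lt (h : ofBitsLE f n < ofBitsLE g n) :
    ∃ i < n, f i = false ∧ g i = true ∧ ∀ l, i < l → l < n → f l = g l := by
  rw [ofBitsLE_eq_sum_filter, ofBitsLE_eq_sum_filter,
    geomSum_lt_geomSum_iff_toColex_lt_toColex le_rfl, Colex.lt_iff_exists_filter_lt] at h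
  obtain ⟨w, hw, hsame⟩ := h
  simp only [mem_sdiff, mem_filter, mem_range] at hw
  refine ⟨w, hw.1.1, by simpa [hw.1.1] using hw.2, hw.1.2, fun l hil hln => ?_⟩
  have := congrArg (l ∈ ·) hsame
  simp only [mem_filter, mem_range, hln, hil, true_and, and_true, eq_iff_iff] at this
  rwa [Bool.eq_iff_iff]

end ofBitsLE

theorem lt_or_eq_and_lt_of_mul_add_lt {P a b s t : ℕ} (ht : t < P) (h : P * a + s < P * b + t) :
    a < b ∨ a = b ∧ s < t := by
  rcases lt_trichotomy a b with hab | rfl | hab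
  · exact .inl hab
  · exact .inr ⟨rfl, by omega⟩
  · have : P * (b + 1) ≤ P * a := Nat.mul_le_mul_left P hab
    rw [mul_add] at this
    omega

theorem eq_true_and_eq_false_and_lt_of_lt_of_gt {P s t x y n : ℕ} {β ν : Bool}
    (hs : s < P) (ht : t < P) (hx : x < 2 ^ n)
    (hlt : P * (2 * x + β.toNat) + s < P * (2 * y + ν.toNat) + t)
    (hgt : P * (y + ν.toNat * 2 ^ n) + t < P * (x + β.toNat * 2 ^ n) + s) :
    β = true ∧ ν = false ∧ x < y := by
  have h₁ := lt_or_eq_and_lt_of_mul_add_lt ht hlt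
  have h₂ := lt_or_eq_and_lt_of_mul_add_lt hs hgt
  cases β <;> cases ν <;>
    simp only [Bool.toNat_false, Bool.toNat_true, true_and, Bool.false_eq_true, false_and]
      at h₁ h₂ ⊢ <;> omega

def bitAt {k : ℕ} (b : Fin k → Bool) (i : ℕ) : Bool :=
  if h : i < k then b ⟨i, h⟩ else false

theorem decodeBE_eq_ofBitsLE (k : ℕ) (c : Fin k → Bool) :
    decodeBE k c = ofBitsLE (fun i => bitAt c (k - 1 - i)) k := by
  calc decodeBE k c = ∑ i ∈ range k, if bitAt c i then 2 ^ (k - 1 - i) else 0 := by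
        rw [← Fin.sum_univ_eq_sum_range (fun i => if bitAt c i then 2 ^ (k - 1 - i) else 0)]
        simp [decodeBE, bitAt]
    _ = _ := by
      rw [ofBitsLE, ← sum_range_reflect]
      refine sum_congr rfl fun i hi => ?_
      rw [show k - 1 - (k - 1 - i) = i by have := mem_range.1 hi; omega]
      cases bitAt c (k - 1 - i) <;> simp

theorem bitAt_of_lt {k i : ℕ} (b : Fin k → Bool) (h : i < k) : bitAt b i = b ⟨i, h⟩ :=
  dif_pos h

theorem bitAt_prefRev {k m : ℕ} (b : Fin k → Bool) (hm : m ≤ k) (i : ℕ) :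
    bitAt (prefRev k m b) i = if i < m then bitAt b (m - 1 - i) else bitAt b i := by
  by_cases hik : i < k
  · by_cases him : i < m
    · simp [bitAt, prefRev, hik, him, hm, show m - 1 - i < k by omega]
    · simp [bitAt, prefRev, hik, him]
  · simp [bitAt, hik, show ¬ i < m by omega]

section prefRev

variable {k : ℕ} (b : Fin k → Bool)

theorem decodeBE_prefRev {m : ℕ} (hm : m ≤ k) :
    decodeBE k (prefRev k m b) =
      2 ^ (k - m) * ofBitsLE (bitAt b) m + ofBitsLE (fun i => bitAt b (k - 1 - i)) (k - m) := by
  calc decodeBE k (prefRev k m b)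
      = ofBitsLE (fun i => bitAt (prefRev k m b) (k - 1 - i)) (k - m + m) := by
        rw [decodeBE_eq_ofBitsLE, Nat.sub_add_cancel hm]
    _ = _ := by
      rw [ofBitsLE_add, add_comm]
      congr 1
      · congr 1
        refine ofBitsLE_congr fun i hi => ?_
        rw [bitAt_prefRev b hm, if_pos (by omega)]
        congr 1
        omega
      · refine ofBitsLE_congr fun i hi => ?_
        rw [bitAt_prefRev b hm, if_neg (by omega)]

theorem decodeBE_prefRev_of_lt {j : ℕ} (hj : j < k) :
    decodeBE k (prefRev k j b) = 2 ^ (k - (j + 1)) * (2 * ofBitsLE (bitAt b) j + (bitAt b j).toNat)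
      + ofBitsLE (fun i => bitAt b (k - 1 - i)) (k - (j + 1)) := by
  rw [decodeBE_prefRev b hj.le, show k - j = k - (j + 1) + 1 by omega, ofBitsLE_succ,
    show k - 1 - (k - (j + 1)) = j by omega, pow_succ]
  ring

theorem decodeBE_prefRev_succ {j : ℕ} (hj : j < k) :
    decodeBE k (prefRev k (j + 1) b) =
      2 ^ (k - (j + 1)) * (ofBitsLE (bitAt b) j + (bitAt b j).toNat * 2 ^ j)
      + ofBitsLE (fun i => bitAt b (k - 1 - i)) (k - (j + 1)) := by
  rw [decodeBE_prefRev b hj, ofBitsLE_succ]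

end prefRev

-- Indices are 0-based: `b ⟨j, _⟩` is the paper's `b_{j+1}`.
/-- If the reversed length-`j` prefix of `b` decodes to a smaller number than that of `v`,
but the reversed length-`(j+1)` prefix of `b` decodes to a larger number than that of `v`,
then `b_{j+1} = 1`, `v_{j+1} = 0`, and there is an index `i ∈ [j]` with `b_i = 0`, `v_i = 1`
and `b_h = v_h` for all `i < h < j+1`.  (Indices here are 0-based shifts of the 1-based ones.) -/
theorem stmt0 (k j : ℕ) (b v : Fin k → Bool) (hjk : j + 1 ≤ k)
    (hlt : decodeBE k (prefRev k j b) < decodeBE k (prefRev k j v))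
    (hgt : decodeBE k (prefRev k (j + 1) v) < decodeBE k (prefRev k (j + 1) b)) :
    b ⟨j, by omega⟩ = true ∧ v ⟨j, by omega⟩ = false ∧
      ∃ i : ℕ, ∃ hi : i < j, b ⟨i, by omega⟩ = false ∧ v ⟨i, by omega⟩ = true ∧
        ∀ h : ℕ, ∀ hh : i < h ∧ h < j, b ⟨h, by omega⟩ = v ⟨h, by omega⟩ := by
  rw [decodeBE_prefRev_of_lt b hjk, decodeBE_prefRev_of_lt v hjk] at hlt
  rw [decodeBE_prefRev_succ b hjk, decodeBE_prefRev_succ v hjk] at hgt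
  obtain ⟨hbj, hvj, hlow⟩ := eq_true_and_eq_false_and_lt_of_lt_of_gt
    (ofBitsLE_lt_two_pow _ _) (ofBitsLE_lt_two_pow _ _) (ofBitsLE_lt_two_pow _ _) hlt hgt
  obtain ⟨i, hij, hbi, hvi, hagree⟩ := exists_lt_of_ofBitsLE_lt hlow
  rw [bitAt_of_lt b hjk] at hbj
  rw [bitAt_of_lt v hjk] at hvj
  rw [bitAt_of_lt b (hij.trans hjk)] at hbi
  rw [bitAt_of_lt v (hij.trans hjk)] at hvi
  refine ⟨hbj, hvj, i, hij, hbi, hvi, fun h hh => ?_⟩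
  rw [← bitAt_of_lt b (by omega), ← bitAt_of_lt v (by omega)]
  exact hagree h hh.1 hh.2
end

section
/- For every binary vector b of length k, the sum over all binary vectors v ≠ b of the number of crossing pairs for (b,v) equals γ_k(b) = Σ_{1 ≤ j < i ≤ k} [b_i ≠ b_j] · 2^{k-i+j-1}. -/
open Finset

/-- `(i,j)` is a crossing pair for `(b,v)`:  `i < j`, the bits `(b_i,v_i),(b_j,v_j)` form
`((0,1),(1,0))` or `((1,0),(0,1))`, and `b` and `v` agree strictly between `i` and `j`. -/
def CrossingPair (k : ℕ) (b v : Fin k → Bool) (p : Fin k × Fin k) : Prop :=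
  p.1 < p.2 ∧
    ((b p.1 = false ∧ v p.1 = true ∧ b p.2 = true ∧ v p.2 = false) ∨
      (b p.1 = true ∧ v p.1 = false ∧ b p.2 = false ∧ v p.2 = true)) ∧
    ∀ h : Fin k, p.1 < h → h < p.2 → b h = v h

instance (k : ℕ) (b v : Fin k → Bool) (p : Fin k × Fin k) : Decidable (CrossingPair k b v p) := by
  unfold CrossingPair; infer_instance

/-- `γ_k(b) = ∑_{j < i} [b_i ≠ b_j] · 2^{k-i+j-1}` (1-based indices; below `p.2` plays the
role of the larger index `i` and `p.1` of `j`, with 0-based exponent `k - 1 - i₀ + j₀`). -/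
def gamma (k : ℕ) (b : Fin k → Bool) : ℕ :=
  ∑ p : Fin k × Fin k,
    if p.1 < p.2 ∧ b p.1 ≠ b p.2 then 2 ^ (k - 1 - (p.2 : ℕ) + (p.1 : ℕ)) else 0

/-!
Double counting: summing over crossing pairs instead of over vectors `v`, the pairs `(j, i)` with
`b_j = b_i` are crossing for no `v`, while for `j < i` with `b_j ≠ b_i` the pair is crossing
exactly when `v` is `b` with both ends flipped on `[j, i]`, leaving the `k - (i - j + 1)`
coordinates outside that interval free. The vector `v = b` itself has no crossing pairs.
-/

lemma Fintype.card_filter_eqOn_finset {ι β : Type*} [Fintype ι] [DecidableEq ι] [Fintype β]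
    (s : Finset ι) (g : ι → β) [DecidablePred fun v : ι → β => ∀ a ∈ s, v a = g a] :
    #{v : ι → β | ∀ a ∈ s, v a = g a} = Fintype.card β ^ #sᶜ := by
  have hpi : ({v : ι → β | ∀ a ∈ s, v a = g a} : Finset (ι → β)) =
      Fintype.piFinset fun a => if a ∈ s then {g a} else univ := by
    ext v
    simp only [mem_filter, mem_univ, true_and, Fintype.mem_piFinset]
    refine forall_congr' fun a => ?_
    split_ifs with ha <;> simp [ha]
  simp only [hpi, Fintype.card_piFinset, apply_ite Finset.card, card_singleton, card_univ]
  rw [prod_ite, prod_const_one, one_mul, prod_const, filter_not, filter_mem_eq_inter, univ_inter,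
    compl_eq_univ_sdiff]

lemma Bool.pairs_cross_iff_of_ne {x y u w : Bool} (h : x ≠ y) :
    ((x = false ∧ u = true ∧ y = true ∧ w = false) ∨
        (x = true ∧ u = false ∧ y = false ∧ w = true)) ↔ u = !x ∧ w = !y := by
  revert x y u w; decide

def flipEnds {k : ℕ} (b : Fin k → Bool) (p : Fin k × Fin k) (a : Fin k) : Bool :=
  if a = p.1 ∨ a = p.2 then !b a else b a

lemma crossingPair_iff {k : ℕ} {b v : Fin k → Bool} {p : Fin k × Fin k} :
    CrossingPair k b v p ↔
      (p.1 < p.2 ∧ b p.1 ≠ b p.2) ∧ ∀ a ∈ Icc p.1 p.2, v a = flipEnds b p a := by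
  by_cases hne : b p.1 = b p.2
  · simp only [CrossingPair, hne, ne_eq, not_true_eq_false, and_false, false_and, iff_false]
    rintro ⟨-, ⟨h1, -, h2, -⟩ | ⟨h1, -, h2, -⟩, -⟩ <;> simp_all
  by_cases hlt : p.1 < p.2
  swap
  · simp [CrossingPair, hlt]
  simp only [CrossingPair, hlt, Bool.pairs_cross_iff_of_ne hne, ne_eq, hne, not_false_eq_true,
    mem_Icc, flipEnds, true_and]
  constructor
  · rintro ⟨⟨h1, h2⟩, hmid⟩ a ⟨ha1, ha2⟩
    rcases ha1.eq_or_lt with rfl | ha1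
    · simpa using h1
    rcases ha2.eq_or_lt with rfl | ha2
    · simpa using h2
    simp [ha1.ne', ha2.ne, hmid a ha1 ha2]
  · intro h
    refine ⟨⟨by simpa using h p.1 ⟨le_rfl, hlt.le⟩, by simpa using h p.2 ⟨hlt.le, le_rfl⟩⟩,
      fun a ha1 ha2 => ?_⟩
    simpa [ha1.ne', ha2.ne] using (h a ⟨ha1.le, ha2.le⟩).symm

lemma not_crossingPair_self {k : ℕ} (b : Fin k → Bool) (p : Fin k × Fin k) :
    ¬ CrossingPair k b b p := by
  rintro ⟨-, ⟨h1, h2, -⟩ | ⟨h1, h2, -⟩, -⟩ <;> simp_all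

lemma card_filter_crossingPair {k : ℕ} (b : Fin k → Bool) (p : Fin k × Fin k) :
    #{v | CrossingPair k b v p} =
      if p.1 < p.2 ∧ b p.1 ≠ b p.2 then 2 ^ (k - 1 - (p.2 : ℕ) + (p.1 : ℕ)) else 0 := by
  simp only [crossingPair_iff]
  split_ifs with hp
  · obtain ⟨hlt, hne⟩ := hp
    simp only [hlt, hne, ne_eq, not_false_eq_true, true_and]
    calc #{v : Fin k → Bool | ∀ a ∈ Icc p.1 p.2, v a = flipEnds b p a}
        = Fintype.card Bool ^ #(Icc p.1 p.2)ᶜ := Fintype.card_filter_eqOn_finset _ _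
      _ = 2 ^ (k - 1 - (p.2 : ℕ) + (p.1 : ℕ)) := by
          rw [Fintype.card_bool, card_compl, Fin.card_Icc, Fintype.card_fin]
          have : (p.1 : ℕ) < p.2 := hlt
          congr 1
          omega
  · simp [hp]

/-- The sum, over all vectors `v ≠ b`, of the number of crossing pairs for `(b,v)`
equals `γ_k(b)`. -/
theorem stmt1 (k : ℕ) (b : Fin k → Bool) :
    ∑ v ∈ Finset.univ.filter (fun v : Fin k → Bool => v ≠ b),
        (Finset.univ.filter (CrossingPair k b v)).card = gamma k b := by
  rw [sum_filter_of_ne (p := fun v => v ≠ b) fun v _ hv hvb => hv (by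
    simp [hvb, not_crossingPair_self])]
  simp only [card_filter]
  rw [sum_comm, gamma]
  simp only [← card_filter, card_filter_crossingPair]
end

section
/- Let G be a graph, X, Y ⊆ V(G) disjoint, and X' ⊂ X, Y' ⊂ Y with |X'| = |Y'| = μ_G(X',Y') < μ_G(X,Y). Then there exist vertices x ∈ X \ X' and y ∈ Y \ Y' such that there is a family of μ_G(X',Y') + 1 pairwise vertex-disjoint paths connecting X' ∪ {x} to Y' ∪ {y}. -/
open SimpleGraph

variable {V : Type}

/-- There are `n` pairwise vertex-disjoint `(X,Y)`-paths in `G`. -/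
def DisjointPathFamily (G : SimpleGraph V) (X Y : Set V) (n : ℕ) : Prop :=
  ∃ (s t : Fin n → V) (P : ∀ i, G.Walk (s i) (t i)),
    (∀ i, s i ∈ X) ∧ (∀ i, t i ∈ Y) ∧ (∀ i, (P i).IsPath) ∧
      ∀ i j, i ≠ j → ∀ x, x ∈ (P i).support → x ∉ (P j).support

/-- `μ_G(X,Y)`: the maximum number of pairwise vertex-disjoint `(X,Y)`-paths. -/
noncomputable def mu (G : SimpleGraph V) (X Y : Set V) : ℕ :=
  sSup {n | DisjointPathFamily G X Y n}

/-!
Encode `μ_G(X',Y') = |X'| = |Y'|` disjoint paths by their successor map `f`: the paths start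
exactly at `X'` and end exactly at `Y'`. Search the residual network of `f`, with every vertex
split into an entry and an exit copy, from the entry copies of `X \ X'`. If the search reaches the
exit copy of some `y ∈ Y \ Y'`, rerouting along that residual walk (adding the edges it uses
forwards, deleting the path arcs it runs backwards) yields `|X'| + 1` disjoint paths from
`X' ∪ {x}` to `Y' ∪ {y}`. Otherwise the vertices where the search gets stuck form an
`(X,Y)`-separator meeting each path of `f` at most once, so `μ_G(X,Y) ≤ |X'|`.
-/

namespace DisjointPathFamily

variable {G : SimpleGraph V} {X Y : Set V} {n : ℕ}

lemma zero (G : SimpleGraph V) (X Y : Set V) : DisjointPathFamily G X Y 0 :=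
  ⟨Fin.elim0, Fin.elim0, fun i => i.elim0, fun i => i.elim0, fun i => i.elim0,
    fun i => i.elim0, fun i => i.elim0⟩

lemma injective_start {s t : Fin n → V} {P : ∀ i, G.Walk (s i) (t i)}
    (hd : ∀ i j, i ≠ j → ∀ x, x ∈ (P i).support → x ∉ (P j).support) :
    Function.Injective s := fun i j hij => by
  by_contra hne
  exact hd i j hne (s i) (P i).start_mem_support (by rw [hij]; exact (P j).start_mem_support)

lemma injective_end {s t : Fin n → V} {P : ∀ i, G.Walk (s i) (t i)}
    (hd : ∀ i j, i ≠ j → ∀ x, x ∈ (P i).support → x ∉ (P j).support) :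
    Function.Injective t := fun i j hij => by
  by_contra hne
  exact hd i j hne (t i) (P i).end_mem_support (by rw [hij]; exact (P j).end_mem_support)

lemma le_card [Fintype V] (h : DisjointPathFamily G X Y n) : n ≤ Fintype.card V := by
  obtain ⟨s, t, P, -, -, -, hd⟩ := h
  simpa using Fintype.card_le_of_injective s (injective_start hd)

end DisjointPathFamily

lemma disjointPathFamily_mu [Fintype V] (G : SimpleGraph V) (X Y : Set V) :
    DisjointPathFamily G X Y (mu G X Y) :=
  Nat.sSup_mem ⟨0, DisjointPathFamily.zero G X Y⟩
    ⟨Fintype.card V, fun _ h => DisjointPathFamily.le_card h⟩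

namespace SimpleGraph.Walk

variable {G : SimpleGraph V} {u v x : V} {p : G.Walk u v} {d d' : G.Dart}

lemma reflTransGen_of_mem_support (hx : x ∈ p.support) :
    Relation.ReflTransGen (fun a b => ∃ d ∈ p.darts, d.toProd = (a, b)) u x := by
  induction p with
  | nil => exact (List.mem_singleton.1 hx) ▸ .refl
  | cons h q ih =>
    rcases List.mem_cons.1 hx with rfl | hx
    · exact .refl
    · refine .head ⟨_, List.mem_cons_self, rfl⟩ (Relation.ReflTransGen.mono ?_ _ _ (ih hx))
      rintro a b ⟨d, hd, hab⟩
      exact ⟨d, List.mem_cons_of_mem _ hd, hab⟩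

lemma exists_dart_fst_eq (hx : x ∈ p.support) (hxv : x ≠ v) : ∃ d ∈ p.darts, d.fst = x := by
  rw [← map_fst_darts_append, List.mem_append, List.mem_singleton] at hx
  simpa [hxv] using hx

lemma exists_dart_snd_eq (hx : x ∈ p.support) (hxu : x ≠ u) : ∃ d ∈ p.darts, d.snd = x := by
  rw [← cons_map_snd_darts, List.mem_cons] at hx
  simpa [hxu] using hx

lemma IsPath.dart_eq_of_fst_eq (hp : p.IsPath) (hd : d ∈ p.darts) (hd' : d' ∈ p.darts)
    (h : d.fst = d'.fst) : d = d' := by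
  refine List.inj_on_of_nodup_map (f := (·.fst)) ?_ hd hd' h
  rw [map_fst_darts]
  exact hp.support_nodup.sublist (List.dropLast_sublist _)

lemma IsPath.dart_eq_of_snd_eq (hp : p.IsPath) (hd : d ∈ p.darts) (hd' : d' ∈ p.darts)
    (h : d.snd = d'.snd) : d = d' := by
  refine List.inj_on_of_nodup_map (f := (·.snd)) ?_ hd hd' h
  rw [map_snd_darts]
  exact hp.support_nodup.sublist (List.tail_sublist _)

lemma IsPath.dart_snd_ne_start (hp : p.IsPath) (hd : d ∈ p.darts) : d.snd ≠ u := by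
  have hnd := hp.support_nodup
  rw [← cons_map_snd_darts, List.nodup_cons] at hnd
  exact fun h => hnd.1 (List.mem_map.2 ⟨d, hd, h⟩)

lemma IsPath.dart_fst_ne_end (hp : p.IsPath) (hd : d ∈ p.darts) : d.fst ≠ v := by
  have hnd := hp.support_nodup
  rw [← map_fst_darts_append, List.nodup_append] at hnd
  exact fun h => hnd.2.2 _ (List.mem_map.2 ⟨d, hd, h⟩) _ (List.mem_singleton_self _) rfl

end SimpleGraph.Walk

lemma Relator.RightUnique.exists_option_eq_some_iff {α β : Type*} {r : α → β → Prop}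
    (hr : Relator.RightUnique r) : ∃ f : α → Option β, ∀ a b, f a = some b ↔ r a b := by
  classical
  refine ⟨fun a => if h : ∃ b, r a b then some h.choose else none, fun a b => ?_⟩
  by_cases h : ∃ b, r a b
  · simp only [dif_pos h, Option.some.injEq]
    exact ⟨fun e => e ▸ h.choose_spec, hr h.choose_spec⟩
  · simp only [dif_neg h, reduceCtorEq, false_iff]
    exact fun hb => h ⟨b, hb⟩

namespace List

variable {α : Type*} {l : List α} {a b c : α}

def Consecutive (l : List α) (a b : α) : Prop := ∃ i, l[i]? = some a ∧ l[i + 1]? = some b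

namespace Consecutive

lemma rel {r : α → α → Prop} (hc : l.IsChain r) (h : l.Consecutive a b) : r a b := by
  obtain ⟨i, ha, hb⟩ := h
  obtain ⟨hi, rfl⟩ := getElem?_eq_some_iff.1 ha
  obtain ⟨hi1, rfl⟩ := getElem?_eq_some_iff.1 hb
  exact isChain_iff_getElem.1 hc i hi1

lemma mem_left (h : l.Consecutive a b) : a ∈ l :=
  let ⟨i, ha, _⟩ := h
  mem_iff_getElem?.2 ⟨i, ha⟩

lemma mem_right (h : l.Consecutive a b) : b ∈ l :=
  let ⟨i, _, hb⟩ := h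
  mem_iff_getElem?.2 ⟨i + 1, hb⟩

lemma right_unique (hl : l.Nodup) (hb : l.Consecutive a b) (hc : l.Consecutive a c) : b = c := by
  obtain ⟨i, ha, hb⟩ := hb
  obtain ⟨j, ha', hc⟩ := hc
  obtain rfl : i = j := (getElem?_inj (getElem?_eq_some_iff.1 ha).1 hl).1 (ha.trans ha'.symm)
  exact Option.some_inj.1 (hb.symm.trans hc)

lemma left_unique (hl : l.Nodup) (hb : l.Consecutive b a) (hc : l.Consecutive c a) : b = c := by
  obtain ⟨i, hb, ha⟩ := hb
  obtain ⟨j, hc, ha'⟩ := hc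
  obtain rfl : i = j := Nat.succ_injective <|
    (getElem?_inj (getElem?_eq_some_iff.1 ha).1 hl).1 (ha.trans ha'.symm)
  exact Option.some_inj.1 (hb.symm.trans hc)

lemma ne_head (hl : l.Nodup) (hh : l.head? = some a) (h : l.Consecutive b a) : False := by
  obtain ⟨i, -, ha⟩ := h
  rw [head?_eq_getElem?] at hh
  exact i.succ_ne_zero ((getElem?_inj (getElem?_eq_some_iff.1 ha).1 hl).1 (ha.trans hh.symm))

end Consecutive

lemma exists_consecutive_right (ha : a ∈ l) (hlast : l.getLast? ≠ some a) :
    ∃ b, l.Consecutive a b := by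
  obtain ⟨i, hi⟩ := mem_iff_getElem?.1 ha
  have hilen : i < l.length := (getElem?_eq_some_iff.1 hi).1
  by_cases h1 : i + 1 < l.length
  · exact ⟨l[i + 1], i, hi, getElem?_eq_some_iff.2 ⟨h1, rfl⟩⟩
  · rw [getLast?_eq_getElem?, show l.length - 1 = i by omega] at hlast
    exact absurd hi hlast

lemma exists_consecutive_left (ha : a ∈ l) (hhead : l.head? ≠ some a) :
    ∃ b, l.Consecutive b a := by
  obtain ⟨_ | j, hi⟩ := mem_iff_getElem?.1 ha
  · exact absurd (head?_eq_getElem?.trans hi) hhead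
  · have hj : j < l.length := by have := (getElem?_eq_some_iff.1 hi).1; omega
    exact ⟨l[j], j, getElem?_eq_some_iff.2 ⟨hj, rfl⟩, hi⟩

end List

lemma Relation.ReflTransGen.exists_nodup_isChain {α : Type*} [DecidableEq α]
    {r : α → α → Prop} {a b : α} (h : Relation.ReflTransGen r a b) :
    ∃ l : List α, l.IsChain r ∧ l.Nodup ∧ l.head? = some a ∧ l.getLast? = some b := by
  induction h using Relation.ReflTransGen.head_induction_on with
  | refl => exact ⟨[b], List.isChain_singleton b, List.nodup_singleton b, rfl, rfl⟩
  | @head a c hac _ ih =>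
    obtain ⟨l, hc, hl, hh, hlast⟩ := ih
    by_cases ha : a ∈ l
    · obtain ⟨l₁, l₂, rfl⟩ := List.append_of_mem ha
      refine ⟨a :: l₂, hc.suffix ⟨l₁, rfl⟩, hl.sublist (List.sublist_append_right _ _), rfl, ?_⟩
      simpa [List.getLast?_append] using hlast
    · refine ⟨a :: l, List.isChain_cons.2 ⟨by simpa [hh] using hac, hc⟩,
        List.nodup_cons.2 ⟨ha, hl⟩, rfl, ?_⟩
      rw [List.getLast?_cons, hlast]
      rfl

section SuccessorMap

open Relation

/-- A successor map encodes vertex-disjoint paths: `f u = some v` says that `v` follows `u`. -/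
structure IsLinkage (G : SimpleGraph V) (f : V → Option V) : Prop where
  adj : ∀ {u v}, f u = some v → G.Adj u v
  inj : ∀ {u u' v}, f u = some v → f u' = some v → u = u'

def IsSource (f : V → Option V) (v : V) : Prop := f v ≠ none ∧ ∀ u, f u ≠ some v

def IsSink (f : V → Option V) (v : V) : Prop := (∃ u, f u = some v) ∧ f v = none

def IsUsed (f : V → Option V) (v : V) : Prop := f v ≠ none ∨ ∃ u, f u = some v

/-- `f` links `A` onto `B`; the last field rules out cycles of `f`. -/
structure IsExactLinkage (G : SimpleGraph V) (f : V → Option V) (A B : Set V) : Prop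
    extends IsLinkage G f where
  isSource : ∀ a ∈ A, IsSource f a
  isSink : ∀ b ∈ B, IsSink f b
  mem_of_isSink : ∀ v, IsSink f v → v ∈ B
  exists_reflTransGen : ∀ v, IsUsed f v → ∃ a ∈ A, ReflTransGen (f · = some ·) a v

variable {G : SimpleGraph V} {f : V → Option V} {s s' u v : V}

lemma IsSource.eq_of_reflTransGen (hs : IsSource f s) (h : ReflTransGen (f · = some ·) v s) :
    v = s := by
  rcases h.cases_tail with rfl | ⟨c, -, hc⟩
  · rfl
  · exact absurd hc (hs.2 c)

namespace IsLinkage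

lemma eq_of_isSource (hf : IsLinkage G f) (hs : IsSource f s) (hs' : IsSource f s')
    (h : ReflTransGen (f · = some ·) s v) (h' : ReflTransGen (f · = some ·) s' v) : s = s' := by
  have hswap : Relator.RightUnique (Function.swap (f · = some ·)) :=
    fun _ _ _ hb hc => hf.inj hb hc
  rcases (ReflTransGen.swap _ _ h).total_of_right_unique hswap (ReflTransGen.swap _ _ h') with
    h'' | h''
  · exact (hs.eq_of_reflTransGen (ReflTransGen.swap _ _ h'')).symm
  · exact hs'.eq_of_reflTransGen (ReflTransGen.swap _ _ h'')

/-- `f` maps the chain from `s` injectively, hence surjectively, into itself, yet `s` has no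
preimage. -/
lemma exists_end_of_isSource [Finite V] (hf : IsLinkage G f) (hs : IsSource f s) :
    ∃ t, ReflTransGen (f · = some ·) s t ∧ f t = none := by
  by_contra! hne
  let C := {v // ReflTransGen (f · = some ·) s v}
  have hsome (v : C) : (f v).isSome := Option.isSome_iff_ne_none.2 (hne v v.2)
  let next (v : C) : C := ⟨(f v).get (hsome v), v.2.tail (Option.some_get _).symm⟩
  have hnext (v : C) : f v = some (next v) := (Option.some_get _).symm
  have hinj : Function.Injective next := fun v w h =>
    Subtype.ext (hf.inj (hnext v) (h ▸ hnext w))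
  obtain ⟨v, hv⟩ := Finite.injective_iff_surjective.1 hinj ⟨s, .refl⟩
  exact hs.2 v ((hnext v).trans (congrArg (some ∘ Subtype.val) hv))

lemma exists_walk_of_reflTransGen (hf : IsLinkage G f) (h : ReflTransGen (f · = some ·) u v) :
    ∃ p : G.Walk u v, ∀ x ∈ p.support, ReflTransGen (f · = some ·) u x := by
  induction h with
  | refl => exact ⟨.nil, fun x hx => List.mem_singleton.1 hx ▸ .refl⟩
  | @tail b c hub hbc ih =>
    obtain ⟨p, hp⟩ := ih
    refine ⟨p.concat (hf.adj hbc), fun x hx => ?_⟩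
    rw [Walk.support_concat, List.mem_append, List.mem_singleton] at hx
    rcases hx with hx | rfl
    · exact hp x hx
    · exact hub.tail hbc

lemma disjointPathFamily [Finite V] (hf : IsLinkage G f) {A B : Set V} (S : Finset V)
    (hS : ∀ v ∈ S, IsSource f v) (hSA : ∀ v ∈ S, v ∈ A) (hB : ∀ v, IsSink f v → v ∈ B) :
    DisjointPathFamily G A B S.card := by
  classical
  have hpath (s : S) : ∃ (t : V) (p : G.Walk s t),
      p.IsPath ∧ t ∈ B ∧ ∀ x ∈ p.support, ReflTransGen (f · = some ·) s x := by
    obtain ⟨t, hst, ht⟩ := hf.exists_end_of_isSource (hS s s.2)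
    obtain ⟨p, hp⟩ := hf.exists_walk_of_reflTransGen hst
    refine ⟨t, p.bypass, p.bypass_isPath, hB t ⟨?_, ht⟩,
      fun x hx => hp x (p.support_bypass_subset_support hx)⟩
    rcases hst.cases_tail with rfl | ⟨c, -, hc⟩
    · exact absurd ht (hS s s.2).1
    · exact ⟨c, hc⟩
  choose t P hP htB hPf using hpath
  let e := S.equivFin.symm
  refine ⟨fun i => e i, fun i => t (e i), fun i => P (e i), fun i => hSA _ (e i).2,
    fun i => htB _, fun i => hP _, fun i j hij x hi hj => hij (e.injective ?_)⟩
  exact Subtype.ext (hf.eq_of_isSource (hS _ (e i).2) (hS _ (e j).2) (hPf _ x hi) (hPf _ x hj))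

end IsLinkage

end SuccessorMap

namespace DisjointPathFamily

open Relation

variable {G : SimpleGraph V} {n : ℕ} {s t : Fin n → V} {P : ∀ i, G.Walk (s i) (t i)}
  {f : V → Option V} {i : Fin n} {v : V}

lemma eq_of_mem_support (hd : ∀ i j, i ≠ j → ∀ x, x ∈ (P i).support → x ∉ (P j).support)
    {i j : Fin n} {x : V} (hi : x ∈ (P i).support) (hj : x ∈ (P j).support) : i = j :=
  by_contra fun hne => hd i j hne x hi hj

lemma exists_isLinkage_of_isPath (hp : ∀ i, (P i).IsPath)
    (hd : ∀ i j, i ≠ j → ∀ x, x ∈ (P i).support → x ∉ (P j).support) :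
    ∃ f : V → Option V, IsLinkage G f ∧
      ∀ u v, f u = some v ↔ ∃ i, ∃ d ∈ (P i).darts, d.toProd = (u, v) := by
  obtain ⟨f, hf⟩ := Relator.RightUnique.exists_option_eq_some_iff
    (r := fun u v => ∃ i, ∃ d ∈ (P i).darts, d.toProd = (u, v)) <| by
    rintro u v v' ⟨i, d, hd', hdp⟩ ⟨j, d', hd'', hdp'⟩
    obtain rfl := eq_of_mem_support hd (hdp ▸ (P i).dart_fst_mem_support_of_mem_darts hd')
      (hdp' ▸ (P j).dart_fst_mem_support_of_mem_darts hd'')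
    have := (hp i).dart_eq_of_fst_eq hd' hd'' (by rw [hdp, hdp'])
    simp_all
  refine ⟨f, ⟨fun h => ?_, fun h h' => ?_⟩, hf⟩
  · obtain ⟨i, d, -, hdp⟩ := (hf _ _).1 h
    simpa [hdp] using d.adj
  · obtain ⟨i, d, hd', hdp⟩ := (hf _ _).1 h
    obtain ⟨j, d', hd'', hdp'⟩ := (hf _ _).1 h'
    obtain rfl := eq_of_mem_support hd (hdp ▸ (P i).dart_snd_mem_support_of_mem_darts hd')
      (hdp' ▸ (P j).dart_snd_mem_support_of_mem_darts hd'')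
    have := (hp i).dart_eq_of_snd_eq hd' hd'' (by rw [hdp, hdp'])
    simp_all

lemma isSource_start (hp : ∀ i, (P i).IsPath)
    (hd : ∀ i j, i ≠ j → ∀ x, x ∈ (P i).support → x ∉ (P j).support)
    (hfP : ∀ u v, f u = some v ↔ ∃ i, ∃ d ∈ (P i).darts, d.toProd = (u, v))
    (hst : s i ≠ t i) : IsSource f (s i) := by
  refine ⟨fun hnone => ?_, fun u hu => ?_⟩
  · obtain ⟨d, hd, hdf⟩ := (P i).exists_dart_fst_eq (P i).start_mem_support hst
    simpa [hnone] using (hfP _ d.snd).2 ⟨i, d, hd, Prod.ext hdf rfl⟩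
  · obtain ⟨j, d, hdj, hdp⟩ := (hfP _ _).1 hu
    have hds : d.snd = s i := congrArg Prod.snd hdp
    obtain rfl := eq_of_mem_support hd (hds ▸ (P j).dart_snd_mem_support_of_mem_darts hdj)
      (P i).start_mem_support
    exact (hp j).dart_snd_ne_start hdj hds

lemma isSink_end (hp : ∀ i, (P i).IsPath)
    (hd : ∀ i j, i ≠ j → ∀ x, x ∈ (P i).support → x ∉ (P j).support)
    (hfP : ∀ u v, f u = some v ↔ ∃ i, ∃ d ∈ (P i).darts, d.toProd = (u, v))
    (hst : s i ≠ t i) : IsSink f (t i) := by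
  refine ⟨?_, Option.eq_none_iff_forall_ne_some.2 fun v hv => ?_⟩
  · obtain ⟨d, hd, hds⟩ := (P i).exists_dart_snd_eq (P i).end_mem_support hst.symm
    exact ⟨d.fst, (hfP _ _).2 ⟨i, d, hd, Prod.ext rfl hds⟩⟩
  · obtain ⟨j, d, hdj, hdp⟩ := (hfP _ _).1 hv
    have hdf : d.fst = t i := congrArg Prod.fst hdp
    obtain rfl := eq_of_mem_support hd (hdf ▸ (P j).dart_fst_mem_support_of_mem_darts hdj)
      (P i).end_mem_support
    exact (hp j).dart_fst_ne_end hdj hdf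

lemma exists_eq_end_of_isSink
    (hfP : ∀ u v, f u = some v ↔ ∃ i, ∃ d ∈ (P i).darts, d.toProd = (u, v))
    (hv : IsSink f v) : ∃ i, t i = v := by
  obtain ⟨⟨u, hu⟩, hv⟩ := hv
  obtain ⟨i, d, hd, hdp⟩ := (hfP _ _).1 hu
  have hds : d.snd = v := congrArg Prod.snd hdp
  refine ⟨i, by_contra fun hvt => ?_⟩
  obtain ⟨d', hd', hdf'⟩ := (P i).exists_dart_fst_eq
    (hds ▸ (P i).dart_snd_mem_support_of_mem_darts hd) (Ne.symm hvt)
  simpa [hv] using (hfP _ d'.snd).2 ⟨i, d', hd', Prod.ext hdf' rfl⟩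

lemma exists_reflTransGen_start
    (hfP : ∀ u v, f u = some v ↔ ∃ i, ∃ d ∈ (P i).darts, d.toProd = (u, v))
    (hv : IsUsed f v) : ∃ i, ReflTransGen (f · = some ·) (s i) v := by
  obtain ⟨i, hvi⟩ : ∃ i, v ∈ (P i).support := by
    rcases hv with hv | ⟨u, hu⟩
    · obtain ⟨w, hw⟩ := Option.ne_none_iff_exists'.1 hv
      obtain ⟨i, d, hd, hdp⟩ := (hfP _ _).1 hw
      have hdf : d.fst = v := congrArg Prod.fst hdp
      exact ⟨i, hdf ▸ (P i).dart_fst_mem_support_of_mem_darts hd⟩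
    · obtain ⟨i, d, hd, hdp⟩ := (hfP _ _).1 hu
      have hds : d.snd = v := congrArg Prod.snd hdp
      exact ⟨i, hds ▸ (P i).dart_snd_mem_support_of_mem_darts hd⟩
  exact ⟨i, ReflTransGen.mono (fun a b ⟨d, hd, hdp⟩ => (hfP a b).2 ⟨i, d, hd, hdp⟩) _ _
    (Walk.reflTransGen_of_mem_support hvi)⟩

lemma exists_isExactLinkage [Finite V] {A B : Set V} (h : DisjointPathFamily G A B n)
    (hAB : Disjoint A B) (hA : A.ncard = n) (hB : B.ncard = n) :
    ∃ f, IsExactLinkage G f A B := by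
  obtain ⟨s, t, P, hs, ht, hp, hd⟩ := h
  obtain ⟨f, hf, hfP⟩ := exists_isLinkage_of_isPath hp hd
  have hsA : Set.range s = A := Set.eq_of_subset_of_ncard_le (Set.range_subset_iff.2 hs)
    (by rw [hA, Set.ncard_range_of_injective (injective_start hd), Nat.card_fin])
  have htB : Set.range t = B := Set.eq_of_subset_of_ncard_le (Set.range_subset_iff.2 ht)
    (by rw [hB, Set.ncard_range_of_injective (injective_end hd), Nat.card_fin])
  have hst (i : Fin n) : s i ≠ t i := hAB.ne_of_mem (hs i) (ht i)
  refine ⟨f, hf, ?_, ?_, fun v hv => ?_, fun v hv => ?_⟩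
  · exact hsA ▸ Set.forall_mem_range.2 fun i => isSource_start hp hd hfP (hst i)
  · exact htB ▸ Set.forall_mem_range.2 fun i => isSink_end hp hd hfP (hst i)
  · obtain ⟨i, rfl⟩ := exists_eq_end_of_isSink hfP hv
    exact ht i
  · obtain ⟨i, hi⟩ := exists_reflTransGen_start hfP hv
    exact ⟨s i, hs i, hi⟩

end DisjointPathFamily

section Residual

open Relation

/-- The residual network of `f` on the digraph in which every vertex `v` is split into an entry
copy `(v, false)` and an exit copy `(v, true)`, joined by an arc of capacity one. -/
inductive ResidualArc (G : SimpleGraph V) (f : V → Option V) : V × Bool → V × Bool → Prop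
  | edge {u v : V} : G.Adj u v → f u ≠ some v → ResidualArc G f (u, true) (v, false)
  | back {u v : V} : f u = some v → ResidualArc G f (v, false) (u, true)
  | enter {v : V} : ¬ IsUsed f v → ResidualArc G f (v, false) (v, true)
  | leave {v : V} : IsUsed f v → ResidualArc G f (v, true) (v, false)

def ResidualReach (G : SimpleGraph V) (f : V → Option V) (X X' : Set V) (w : V × Bool) :
    Prop :=
  ∃ x ∈ X \ X', ReflTransGen (ResidualArc G f) (x, false) w

def residualSeparator (G : SimpleGraph V) (f : V → Option V) (X X' Y' : Set V) : Set V :=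
  {v | IsUsed f v ∧ ResidualReach G f X X' (v, false) ∧ ¬ ResidualReach G f X X' (v, true)} ∪
    {v | v ∈ X' ∧ ¬ ResidualReach G f X X' (v, false)} ∪
    {v | v ∈ Y' ∧ ResidualReach G f X X' (v, true)}

variable {G : SimpleGraph V} {f : V → Option V} {X X' Y Y' : Set V} {u v w : V}

namespace ResidualReach

lemma tail {a b : V × Bool} (h : ResidualReach G f X X' a) (hab : ResidualArc G f a b) :
    ResidualReach G f X X' b :=
  let ⟨x, hx, hxa⟩ := h
  ⟨x, hx, hxa.tail hab⟩

lemma entry_of_exit (h : ResidualReach G f X X' (u, true))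
    (hu : f u = some v) : ResidualReach G f X X' (v, false) := by
  obtain ⟨x, hx, hxu⟩ := h
  rcases hxu.cases_tail with heq | ⟨c, hxc, hcu⟩
  · simp at heq
  · cases hcu with
    | back hw => exact Option.some_inj.1 (hw.symm.trans hu) ▸ ⟨x, hx, hxc⟩
    | enter hnu => exact absurd (Or.inl (by simp [hu])) hnu

lemma exit_of_transGen (hw : ResidualReach G f X X' (w, false))
    (h : TransGen (f · = some ·) v w) : ResidualReach G f X X' (v, true) := by
  induction h with
  | single hvw => exact hw.tail (.back hvw)
  | tail _ hpw ih => exact ih ((hw.tail (.back hpw)).tail (.leave (Or.inl (by simp [hpw]))))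

end ResidualReach

lemma mem_residualSeparator (hv : ResidualReach G f X X' (v, false))
    (hv' : ¬ ResidualReach G f X X' (v, true)) : v ∈ residualSeparator G f X X' Y' :=
  Or.inl (Or.inl ⟨by_contra fun hnu => hv' (hv.tail (.enter hnu)), hv, hv'⟩)

lemma exists_mem_support_mem_residualSeparator
    (hY : ∀ y ∈ Y \ Y', ¬ ResidualReach G f X X' (y, true)) (p : G.Walk u v)
    (hu : ResidualReach G f X X' (u, false)) (hv : v ∈ Y) :
    ∃ z ∈ p.support, z ∈ residualSeparator G f X X' Y' := by
  induction p with
  | @nil a =>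
    refine ⟨a, List.mem_singleton_self _, ?_⟩
    by_cases hR : ResidualReach G f X X' (a, true)
    · exact Or.inr ⟨by_contra fun hY' => hY _ ⟨hv, hY'⟩ hR, hR⟩
    · exact mem_residualSeparator hu hR
  | @cons a b _ hab q ih =>
    by_cases hR : ResidualReach G f X X' (a, true)
    · have hb : ResidualReach G f X X' (b, false) := by
        by_cases hfab : f a = some b
        · exact hR.entry_of_exit hfab
        · exact hR.tail (.edge hab hfab)
      obtain ⟨z, hz, hzS⟩ := ih hb hv
      exact ⟨z, List.mem_cons_of_mem _ hz, hzS⟩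
    · exact ⟨a, List.mem_cons_self, mem_residualSeparator hu hR⟩

/-- Two vertices of the separator never lie on a common path: the later one would make the
residual search reach past the earlier one. -/
lemma not_transGen_of_mem_residualSeparator (hf : IsExactLinkage G f X' Y')
    (hv : v ∈ residualSeparator G f X X' Y') (hw : w ∈ residualSeparator G f X X' Y')
    (h : TransGen (f · = some ·) v w) : False := by
  obtain ⟨p, -, hpw⟩ := TransGen.tail'_iff.1 h
  have hvout : f v ≠ none := by
    obtain ⟨c, hvc, -⟩ := TransGen.head'_iff.1 h
    simp [hvc]
  have hwR : ResidualReach G f X X' (w, false) := by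
    rcases hw with (⟨-, hwR, -⟩ | ⟨hwX', -⟩) | ⟨-, hwR⟩
    · exact hwR
    · exact absurd hpw ((hf.isSource w hwX').2 p)
    · exact hwR.tail (.leave (Or.inr ⟨p, hpw⟩))
  have hvR := hwR.exit_of_transGen h
  rcases hv with (⟨-, -, hvR'⟩ | ⟨-, hvR'⟩) | ⟨hvY', -⟩
  · exact hvR' hvR
  · exact hvR' (hvR.tail (.leave (Or.inl hvout)))
  · exact hvout (hf.isSink v hvY').2

lemma ncard_residualSeparator_le [Finite V] (hf : IsExactLinkage G f X' Y') :
    (residualSeparator G f X X' Y').ncard ≤ X'.ncard := by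
  have hused : ∀ v ∈ residualSeparator G f X X' Y', IsUsed f v := by
    rintro v ((⟨hv, -⟩ | ⟨hv, -⟩) | ⟨hv, -⟩)
    · exact hv
    · exact Or.inl (hf.isSource v hv).1
    · exact Or.inr (hf.isSink v hv).1
  choose! σ hσX hσ using fun v hv => hf.exists_reflTransGen v (hused v hv)
  refine Set.ncard_le_ncard_of_injOn σ hσX (fun v hv w hw hvw => ?_)
  have hfun : Relator.RightUnique (f · = some ·) :=
    fun _ _ _ hb hc => Option.some_inj.1 (hb.symm.trans hc)
  rcases (hσ v hv).total_of_right_unique hfun (hvw ▸ hσ w hw) with h | h <;>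
    rcases reflTransGen_iff_eq_or_transGen.1 h with h | h
  · exact h.symm
  · exact (not_transGen_of_mem_residualSeparator hf hv hw h).elim
  · exact h
  · exact (not_transGen_of_mem_residualSeparator hf hw hv h).elim

lemma mu_le_ncard_of_not_residualReach [Fintype V] (hf : IsExactLinkage G f X' Y')
    (hY : ∀ y ∈ Y \ Y', ¬ ResidualReach G f X X' (y, true)) : mu G X Y ≤ X'.ncard := by
  obtain ⟨s, t, P, hs, ht, -, hd⟩ := disjointPathFamily_mu G X Y
  have hmeet (i) : ∃ z ∈ (P i).support, z ∈ residualSeparator G f X X' Y' := by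
    by_cases hsi : s i ∈ X' ∧ ¬ ResidualReach G f X X' (s i, false)
    · exact ⟨s i, (P i).start_mem_support, Or.inl (Or.inr hsi)⟩
    refine exists_mem_support_mem_residualSeparator hY (P i) ?_ (ht i)
    by_cases hX' : s i ∈ X'
    · exact not_not.1 fun h => hsi ⟨hX', h⟩
    · exact ⟨s i, ⟨hs i, hX'⟩, .refl⟩
  choose z hzP hzS using hmeet
  have hz : Function.Injective z := fun i j hij =>
    DisjointPathFamily.eq_of_mem_support hd (hzP i) (hij ▸ hzP j)
  calc mu G X Y = (Set.range z).ncard := by rw [Set.ncard_range_of_injective hz, Nat.card_fin]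
    _ ≤ (residualSeparator G f X X' Y').ncard := Set.ncard_le_ncard (Set.range_subset_iff.2 hzS)
    _ ≤ X'.ncard := ncard_residualSeparator_le hf

end Residual

section Augmentation

open Relation

variable {G : SimpleGraph V} {f : V → Option V} {l : List (V × Bool)} {X X' Y Y' : Set V}
  {x y u u' v w : V}

/-- The successor relation after augmenting along the residual walk `l`: it gains the edges
that `l` crosses from an exit copy to an entry copy and loses the arcs that `l` runs backwards. -/
def AugmentedArc (f : V → Option V) (l : List (V × Bool)) (u v : V) : Prop :=
  (l.Consecutive (u, true) (v, false) ∧ u ≠ v) ∨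
    (f u = some v ∧ ¬ l.Consecutive (v, false) (u, true))

lemma consecutive_back_of_entry_mem (hf : IsLinkage G f) (hc : l.IsChain (ResidualArc G f))
    (hlast : l.getLast? = some (y, true)) (hv : (v, false) ∈ l) (hu : f u = some v) :
    l.Consecutive (v, false) (u, true) := by
  obtain ⟨c, hvc⟩ := List.exists_consecutive_right hv (by simp [hlast])
  cases hvc.rel hc with
  | back hw => exact hf.inj hw hu ▸ hvc
  | enter hnu => exact absurd (Or.inr ⟨u, hu⟩) hnu

lemma consecutive_back_of_exit_mem (hc : l.IsChain (ResidualArc G f))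
    (hh : l.head? = some (x, false)) (hu : (u, true) ∈ l) (hw : f u = some w) :
    l.Consecutive (w, false) (u, true) := by
  obtain ⟨c, hcu⟩ := List.exists_consecutive_left hu (by simp [hh])
  cases hcu.rel hc with
  | back hw' => exact Option.some_inj.1 (hw'.symm.trans hw) ▸ hcu
  | enter hnu => exact absurd (Or.inl (by simp [hw])) hnu

lemma entry_not_mem_of_isSource (hc : l.IsChain (ResidualArc G f))
    (hlast : l.getLast? = some (y, true)) (hs : IsSource f v) : (v, false) ∉ l := fun hv => by
  obtain ⟨c, hvc⟩ := List.exists_consecutive_right hv (by simp [hlast])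
  cases hvc.rel hc with
  | back hw => exact hs.2 _ hw
  | enter hnu => exact hnu (Or.inl hs.1)

lemma exists_augmentedArc_or_consecutive_of_exit_mem (hc : l.IsChain (ResidualArc G f))
    (hlast : l.getLast? = some (y, true)) (hv : (v, true) ∈ l) (hvy : v ≠ y) :
    (∃ w, AugmentedArc f l v w) ∨ l.Consecutive (v, true) (v, false) := by
  obtain ⟨c, hvc⟩ := List.exists_consecutive_right hv (by simp [hlast, Ne.symm hvy])
  cases hvc.rel hc with
  | edge hadj _ => exact Or.inl ⟨_, Or.inl ⟨hvc, hadj.ne⟩⟩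
  | leave _ => exact Or.inr hvc

namespace AugmentedArc

lemma rightUnique (hl : l.Nodup) (hc : l.IsChain (ResidualArc G f))
    (hh : l.head? = some (x, false)) : Relator.RightUnique (AugmentedArc f l) := by
  rintro u v w (⟨hv, -⟩ | ⟨hv, hnv⟩) (⟨hw, -⟩ | ⟨hw, hnw⟩)
  · exact (Prod.mk.inj (hv.right_unique hl hw)).1
  · exact absurd (consecutive_back_of_exit_mem hc hh hv.mem_left hw) hnw
  · exact absurd (consecutive_back_of_exit_mem hc hh hw.mem_left hv) hnv
  · exact Option.some_inj.1 (hv.symm.trans hw)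

lemma adj (hf : IsLinkage G f) (hc : l.IsChain (ResidualArc G f))
    (h : AugmentedArc f l u v) : G.Adj u v := by
  rcases h with ⟨huv, hne⟩ | ⟨huv, -⟩
  · cases huv.rel hc with
    | edge hadj _ => exact hadj
    | leave _ => exact absurd rfl hne
  · exact hf.adj huv

lemma inj (hf : IsLinkage G f) (hl : l.Nodup) (hc : l.IsChain (ResidualArc G f))
    (hlast : l.getLast? = some (y, true)) (h : AugmentedArc f l u v)
    (h' : AugmentedArc f l u' v) : u = u' := by
  rcases h with ⟨h, -⟩ | ⟨h, hn⟩ <;> rcases h' with ⟨h', -⟩ | ⟨h', hn'⟩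
  · exact (Prod.mk.inj (h.left_unique hl h')).1
  · exact absurd (consecutive_back_of_entry_mem hf hc hlast h.mem_right h') hn'
  · exact absurd (consecutive_back_of_entry_mem hf hc hlast h'.mem_right h) hn
  · exact hf.inj h h'

lemma not_of_consecutive_exit_entry (hf : IsLinkage G f) (hl : l.Nodup)
    (hc : l.IsChain (ResidualArc G f)) (hlast : l.getLast? = some (y, true))
    (hvv : l.Consecutive (v, true) (v, false)) (h : AugmentedArc f l u v) : False := by
  rcases h with ⟨huv, hne⟩ | ⟨huv, hn⟩
  · exact hne (Prod.mk.inj (huv.left_unique hl hvv)).1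
  · exact hn (consecutive_back_of_entry_mem hf hc hlast hvv.mem_right huv)

lemma not_to_start (hf : IsLinkage G f) (hl : l.Nodup) (hc : l.IsChain (ResidualArc G f))
    (hh : l.head? = some (x, false)) (hlast : l.getLast? = some (y, true)) :
    ¬ AugmentedArc f l u x := by
  rintro (⟨hux, -⟩ | ⟨hux, hn⟩)
  · exact hux.ne_head hl hh
  · exact hn (consecutive_back_of_entry_mem hf hc hlast (List.mem_of_mem_head? hh) hux)

lemma not_to_isSource (hc : l.IsChain (ResidualArc G f)) (hlast : l.getLast? = some (y, true))
    (hs : IsSource f v) : ¬ AugmentedArc f l u v := by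
  rintro (⟨huv, -⟩ | ⟨huv, -⟩)
  · exact entry_not_mem_of_isSource hc hlast hs huv.mem_right
  · exact hs.2 u huv

lemma exists_of_not_consecutive (hc : l.IsChain (ResidualArc G f))
    (hlast : l.getLast? = some (y, true)) (hvy : v ≠ y)
    (hvv : ¬ l.Consecutive (v, true) (v, false)) (hv : f v ≠ none ∨ (v, true) ∈ l) :
    ∃ w, AugmentedArc f l v w := by
  have hexit : (v, true) ∈ l ∨ ∃ w, AugmentedArc f l v w := by
    rcases hv with hv | hv
    · obtain ⟨w, hw⟩ := Option.ne_none_iff_exists'.1 hv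
      by_cases hwv : l.Consecutive (w, false) (v, true)
      · exact Or.inl hwv.mem_right
      · exact Or.inr ⟨w, Or.inr ⟨hw, hwv⟩⟩
    · exact Or.inl hv
  rcases hexit with hv | hw
  · exact (exists_augmentedArc_or_consecutive_of_exit_mem hc hlast hv hvy).resolve_right hvv
  · exact hw

lemma isSource_of_mem_insert (hf : IsExactLinkage G f X' Y') (hl : l.Nodup)
    (hc : l.IsChain (ResidualArc G f)) (hh : l.head? = some (x, false))
    (hlast : l.getLast? = some (y, true)) (hxs : ¬ IsSink f x) (hv : v ∈ insert x X')
    (hvy : v ≠ y) : (∃ w, AugmentedArc f l v w) ∧ ∀ u, ¬ AugmentedArc f l u v := by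
  rcases hv with rfl | hv
  · refine ⟨exists_of_not_consecutive hc hlast hvy (fun h => h.ne_head hl hh) ?_,
      fun u => not_to_start hf.toIsLinkage hl hc hh hlast⟩
    by_cases hfv : f v = none
    · obtain ⟨c, hvc⟩ := List.exists_consecutive_right (List.mem_of_mem_head? hh) (by simp [hlast])
      cases hvc.rel hc with
      | back hq => exact (hxs ⟨⟨_, hq⟩, hfv⟩).elim
      | enter _ => exact Or.inr hvc.mem_right
    · exact Or.inl hfv
  · have hs := hf.isSource v hv
    exact ⟨exists_of_not_consecutive hc hlast hvy
      (fun h => entry_not_mem_of_isSource hc hlast hs h.mem_right) (Or.inl hs.1),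
      fun u => not_to_isSource hc hlast hs⟩

lemma mem_insert_of_isSink (hf : IsExactLinkage G f X' Y') (hl : l.Nodup)
    (hc : l.IsChain (ResidualArc G f)) (hlast : l.getLast? = some (y, true))
    (huv : AugmentedArc f l u v) (hv : ∀ w, ¬ AugmentedArc f l v w) : v ∈ insert y Y' := by
  by_cases hvy : v = y
  · exact Or.inl hvy
  have hexit : (v, true) ∉ l := fun hvl => by
    rcases exists_augmentedArc_or_consecutive_of_exit_mem hc hlast hvl hvy with ⟨w, hw⟩ | hvv
    · exact hv w hw
    · exact not_of_consecutive_exit_entry hf.toIsLinkage hl hc hlast hvv huv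
  cases hfv : f v with
  | some w => exact (hexit (not_not.1 fun hwv => hv w (Or.inr ⟨hfv, hwv⟩)).mem_right).elim
  | none =>
    by_cases hin : ∃ p, f p = some v
    · exact Or.inr (hf.mem_of_isSink v ⟨hin, hfv⟩)
    rcases huv with ⟨huv, -⟩ | ⟨hp, -⟩
    · obtain ⟨c, hvc⟩ := List.exists_consecutive_right huv.mem_right (by simp [hlast])
      cases hvc.rel hc with
      | back hq => exact (hin ⟨_, hq⟩).elim
      | enter _ => exact (hexit hvc.mem_right).elim
    · exact (hin ⟨u, hp⟩).elim

end AugmentedArc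

lemma IsExactLinkage.disjointPathFamily_insert [Finite V]
    (hf : IsExactLinkage G f X' Y') (hXY : Disjoint X Y) (hX'X : X' ⊆ X) (hY'Y : Y' ⊆ Y)
    (hx : x ∈ X \ X') (hy : y ∈ Y) (h : ReflTransGen (ResidualArc G f) (x, false) (y, true)) :
    DisjointPathFamily G (insert x X') (insert y Y') (X'.ncard + 1) := by
  classical
  obtain ⟨l, hc, hl, hh, hlast⟩ := h.exists_nodup_isChain
  obtain ⟨g, hg⟩ := (AugmentedArc.rightUnique hl hc hh).exists_option_eq_some_iff
  have hg' : IsLinkage G g :=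
    ⟨fun huv => AugmentedArc.adj hf.toIsLinkage hc ((hg _ _).1 huv), fun huv hu'v =>
      AugmentedArc.inj hf.toIsLinkage hl hc hlast ((hg _ _).1 huv) ((hg _ _).1 hu'v)⟩
  have hxs : ¬ IsSink f x := fun hs => hXY.ne_of_mem hx.1 (hY'Y (hf.mem_of_isSink x hs)) rfl
  have hsrc (v) (hv : v ∈ insert x X') : IsSource g v := by
    have hvy : v ≠ y := hXY.ne_of_mem (Set.insert_subset hx.1 hX'X hv) hy
    obtain ⟨⟨w, hw⟩, hin⟩ := AugmentedArc.isSource_of_mem_insert hf hl hc hh hlast hxs hv hvy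
    exact ⟨by simp [(hg v w).2 hw], fun u hu => hin u ((hg u v).1 hu)⟩
  have hsink (v) (hv : IsSink g v) : v ∈ insert y Y' := by
    obtain ⟨⟨u, hu⟩, hv⟩ := hv
    exact AugmentedArc.mem_insert_of_isSink hf hl hc hlast ((hg u v).1 hu)
      fun w hw => by simp [(hg v w).2 hw] at hv
  have hfin := Set.toFinite (insert x X')
  have hcard : hfin.toFinset.card = X'.ncard + 1 := by
    rw [← Set.ncard_eq_toFinset_card _ hfin, Set.ncard_insert_of_notMem hx.2]
  exact hcard ▸ hg'.disjointPathFamily hfin.toFinset (fun v hv => hsrc v (hfin.mem_toFinset.1 hv))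
    (fun v hv => hfin.mem_toFinset.1 hv) hsink

end Augmentation

/-- Augmenting path lemma: if `X' ⊂ X`, `Y' ⊂ Y` with `|X'| = |Y'| = μ_G(X',Y') < μ_G(X,Y)`,
then there are `x ∈ X \ X'` and `y ∈ Y \ Y'` together with a family of `μ_G(X',Y') + 1`
pairwise vertex-disjoint paths from `X' ∪ {x}` to `Y' ∪ {y}`. -/
theorem stmt6 [Fintype V] (G : SimpleGraph V) (X Y X' Y' : Set V)
    (hXY : Disjoint X Y) (hX' : X' ⊂ X) (hY' : Y' ⊂ Y)
    (hcard : X'.ncard = Y'.ncard) (hsat : X'.ncard = mu G X' Y')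
    (hlt : mu G X' Y' < mu G X Y) :
    ∃ x ∈ X \ X', ∃ y ∈ Y \ Y',
      DisjointPathFamily G (X' ∪ {x}) (Y' ∪ {y}) (mu G X' Y' + 1) := by
  obtain ⟨f, hf⟩ := (disjointPathFamily_mu G X' Y').exists_isExactLinkage
    (hXY.mono hX'.subset hY'.subset) hsat (hcard ▸ hsat)
  by_cases hreach : ∃ y ∈ Y \ Y', ResidualReach G f X X' (y, true)
  · obtain ⟨y, hy, x, hx, hxy⟩ := hreach
    refine ⟨x, hx, y, hy, ?_⟩
    rw [Set.union_singleton, Set.union_singleton, ← hsat]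
    exact hf.disjointPathFamily_insert hXY hX'.subset hY'.subset hx hy.1 hxy
  · have := mu_le_ncard_of_not_residualReach hf fun y hy hR => hreach ⟨y, hy, hR⟩
    omega
end

section
/- In the cylindrical grid C_k^m with k ≥ 3 and m ≥ k², if s₁,...,s_{k-1} lie in this cyclic (clockwise) order on the innermost cycle C¹ and t₁,...,t_{k-1} lie in this cyclic (clockwise) order on the outermost cycle C^m, then there exist pairwise vertex-disjoint paths P₁,...,P_{k-1} with P_i connecting s_i to t_i. -/
/-- The `(k,m)`-cylindrical grid: vertex `(i,j)` lies on the `j`-th concentric cycle at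
angular position `i`; cycle edges go between consecutive angular positions (mod `k`),
radial edges between consecutive cycles. -/
def cylGrid (k m : ℕ) : SimpleGraph (Fin k × Fin m) where
  Adj p q := p ≠ q ∧
    ((p.2 = q.2 ∧ (((p.1 : ℕ) + 1) % k = (q.1 : ℕ) ∨ ((q.1 : ℕ) + 1) % k = (p.1 : ℕ))) ∨
      (p.1 = q.1 ∧ ((p.2 : ℕ) + 1 = (q.2 : ℕ) ∨ (q.2 : ℕ) + 1 = (p.2 : ℕ))))
  symm := by
    constructor
    rintro p q ⟨hne, h⟩
    refine ⟨hne.symm, ?_⟩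
    rcases h with ⟨h1, h2⟩ | ⟨h1, h2⟩
    · exact Or.inl ⟨h1.symm, h2.symm⟩
    · exact Or.inr ⟨h1.symm, h2.symm⟩
  loopless := ⟨fun p h => h.1 rfl⟩

/-- A sequence of angular positions is in clockwise cyclic order if some rotation makes
it strictly increasing modulo `k`. -/
def InCwCyclicOrder (k n : ℕ) (s : Fin n → Fin k) : Prop :=
  ∃ r : ℕ, StrictMono fun a => ((s a : ℕ) + r) % k

/-!
A clockwise arrangement of `k - 1` tokens on the `k` positions of a cycle is determined by its
hole `h` and by the token `c` sitting just after the hole. Moving the token in front of the hole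
into the hole moves a single token one step clockwise and turns `(h, c)` into `(h - 1, c - 1)`.
As `k` and `k - 1` are coprime, some number `N < k (k - 1)` of such moves turns the arrangement
of the `s_i` into that of the `t_i`. Doing one move on each of the first `N` levels of the grid,
every token climbs radially and takes at most one clockwise step per level; tokens never collide,
since a moving token enters the position that was empty.
-/

open SimpleGraph

theorem Fin.exists_succAbove_eq_of_strictMono {m : ℕ} {g : Fin m → Fin (m + 1)}
    (hg : StrictMono g) : ∃ p : Fin (m + 1), g = p.succAbove := by
  classical
  have hcard : (Finset.univ.image g).card = m := by
    rw [Finset.card_image_of_injective _ hg.injective, Finset.card_univ, Fintype.card_fin]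
  obtain ⟨p, -, hp⟩ := Finset.exists_mem_notMem_of_card_lt_card (s := Finset.univ.image g)
    (t := Finset.univ) (by simp [hcard])
  have himage : Finset.univ.image g = Finset.univ.erase p :=
    Finset.eq_of_subset_of_card_le
      (fun y hy => Finset.mem_erase.mpr ⟨fun h => hp (h ▸ hy), Finset.mem_univ _⟩)
      (by simp [hcard])
  refine ⟨p, (hg.range_inj (Fin.strictMono_succAbove p)).mp ?_⟩
  ext y
  simpa using Finset.ext_iff.mp himage y

namespace cylGrid

variable {k m : ℕ}

lemma adj_of_fst_eq {p q : Fin k × Fin m} (h₁ : p.1 = q.1) (h₂ : (p.2 : ℕ) + 1 = q.2) :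
    (cylGrid k m).Adj p q :=
  ⟨fun e => by rw [e] at h₂; omega, Or.inr ⟨h₁, Or.inl h₂⟩⟩

lemma adj_of_fst_add_one [NeZero k] {p q : Fin k × Fin m} (h₁ : q.1 = p.1 + 1) (h₂ : p.2 = q.2)
    (hne : p.1 ≠ q.1) : (cylGrid k m).Adj p q :=
  ⟨fun e => hne (congrArg Prod.fst e),
    Or.inl ⟨h₂, Or.inl (by rw [h₁, Fin.val_add, Fin.val_one', Nat.add_mod_mod])⟩⟩

theorem exists_isPath_of_schedule [NeZero k] (pos : ℕ → Fin k)
    (hstep : ∀ ℓ, pos (ℓ + 1) = pos ℓ ∨ pos (ℓ + 1) = pos ℓ + 1) (j : ℕ) (hj : j < m) :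
    ∃ W : (cylGrid k m).Walk (pos j, ⟨j, hj⟩) (pos (m - 1), ⟨m - 1, by omega⟩),
      W.IsPath ∧ ∀ x ∈ W.support, j ≤ x.2 ∧ (x.1 = pos x.2 ∨ x.1 = pos (x.2 + 1)) := by
  by_cases htop : j + 1 < m
  swap
  · obtain rfl : j = m - 1 := by omega
    exact ⟨.nil, .nil, fun x hx => by
      rw [Walk.support_nil, List.mem_singleton] at hx; exact hx ▸ ⟨le_rfl, Or.inl rfl⟩⟩
  obtain ⟨W, hW, hsupp⟩ := exists_isPath_of_schedule pos hstep (j + 1) htop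
  have hlevel : ∀ i : Fin k, (i, (⟨j, hj⟩ : Fin m)) ∉ W.support :=
    fun i hi => by have := (hsupp _ hi).1; simp at this
  have hsuppW : ∀ x ∈ W.support, j ≤ x.2 ∧ (x.1 = pos x.2 ∨ x.1 = pos (x.2 + 1)) :=
    fun x hx => ⟨by have := (hsupp x hx).1; omega, (hsupp x hx).2⟩
  have hrad : (cylGrid k m).Adj (pos (j + 1), ⟨j, hj⟩) (pos (j + 1), ⟨j + 1, htop⟩) :=
    adj_of_fst_eq rfl rfl
  by_cases hstay : pos (j + 1) = pos j
  · refine ⟨.cons (hstay ▸ hrad) W, hW.cons (hlevel _), ?_⟩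
    rw [Walk.support_cons]
    exact List.forall_mem_cons.mpr ⟨⟨le_rfl, Or.inl rfl⟩, hsuppW⟩
  · have hcyc : (cylGrid k m).Adj (pos j, ⟨j, hj⟩) (pos (j + 1), ⟨j, hj⟩) :=
      adj_of_fst_add_one ((hstep j).resolve_left hstay) rfl (Ne.symm hstay)
    refine ⟨.cons hcyc (.cons hrad W), (hW.cons (hlevel _)).cons ?_, ?_⟩
    · simpa [Walk.support_cons, Ne.symm hstay] using hlevel _
    · rw [Walk.support_cons, Walk.support_cons]
      exact List.forall_mem_cons.mpr ⟨⟨le_rfl, Or.inl rfl⟩,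
        List.forall_mem_cons.mpr ⟨⟨le_rfl, Or.inr rfl⟩, hsuppW⟩⟩
termination_by m - j

theorem exists_disjoint_paths_of_schedules [NeZero k] {ι : Type*} (pos : ι → ℕ → Fin k)
    (hstep : ∀ a ℓ, pos a (ℓ + 1) = pos a ℓ ∨ pos a (ℓ + 1) = pos a ℓ + 1)
    (hinj : ∀ ℓ, Function.Injective (pos · ℓ))
    (hcross : ∀ ℓ a b, a ≠ b → pos a ℓ ≠ pos b (ℓ + 1)) (hm : 0 < m) :
    ∃ P : ∀ a, (cylGrid k m).Walk (pos a 0, ⟨0, hm⟩) (pos a (m - 1), ⟨m - 1, by omega⟩),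
      (∀ a, (P a).IsPath) ∧ ∀ a b, a ≠ b → ∀ x ∈ (P a).support, x ∉ (P b).support := by
  choose P hP hsupp using fun a => exists_isPath_of_schedule (pos a) (hstep a) 0 hm
  refine ⟨P, hP, fun a b hab x hxa hxb => ?_⟩
  rcases (hsupp a x hxa).2 with ha | ha <;> rcases (hsupp b x hxb).2 with hb | hb
  · exact hab (hinj _ (ha.symm.trans hb))
  · exact hcross _ a b hab (ha.symm.trans hb)
  · exact hcross _ b a hab.symm (hb.symm.trans ha)
  · exact hab (hinj _ (ha.symm.trans hb))

end cylGrid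

namespace CylGridLinkage

open Fin.CommRing

variable {n : ℕ}

/-- The position of token `a` when the hole is at `x.1` and the tokens `x.2, x.2 + 1, …`
occupy `x.1 + 1, x.1 + 2, …` clockwise. -/
def slot (x : Fin (n + 2) × Fin (n + 1)) (a : Fin (n + 1)) : Fin (n + 2) :=
  x.1 + 1 + (a - x.2).castSucc

lemma slot_eq_add_succ (x : Fin (n + 2) × Fin (n + 1)) (a : Fin (n + 1)) :
    slot x a = x.1 + (a - x.2).succ := by
  rw [slot, ← Fin.coeSucc_eq_succ]; abel

lemma slot_ne_fst (x : Fin (n + 2) × Fin (n + 1)) (a : Fin (n + 1)) : slot x a ≠ x.1 := by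
  rw [slot_eq_add_succ, Ne, add_eq_left]
  exact Fin.succ_ne_zero _

lemma slot_injective (x : Fin (n + 2) × Fin (n + 1)) : Function.Injective (slot x) := by
  intro a b h
  simpa using Fin.castSucc_injective _ (add_left_cancel h)

lemma slot_sub_one (x : Fin (n + 2) × Fin (n + 1)) (a : Fin (n + 1)) :
    slot (x - 1) a = slot x a ∨ slot (x - 1) a = slot x a + 1 ∧ slot (x - 1) a = x.1 := by
  have hsub : slot (x - 1) a = x.1 - 1 + 1 + (a - x.2 + 1).castSucc := by
    simp only [slot, Prod.fst_sub, Prod.snd_sub, Prod.fst_one, Prod.snd_one]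
    congr 3; abel
  rcases (a - x.2).le_last.lt_or_eq with hlt | hlast
  · left
    have hsucc : (a - x.2 + 1).castSucc = (a - x.2).castSucc + 1 := by
      rw [Fin.coeSucc_eq_succ]; exact Fin.ext (Fin.val_add_one_of_lt hlt)
    rw [hsub, hsucc, slot]; abel
  · right
    have hhole : slot (x - 1) a = x.1 := by simp [hsub, hlast]
    refine ⟨?_, hhole⟩
    rw [hhole, slot_eq_add_succ, hlast, Fin.succ_last, add_assoc, Fin.last_add_one, add_zero]

lemma slot_ne_slot_sub_one {a b : Fin (n + 1)} (hab : a ≠ b) (x : Fin (n + 2) × Fin (n + 1)) :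
    slot x a ≠ slot (x - 1) b := by
  rcases slot_sub_one x b with h | ⟨-, h⟩
  · exact h ▸ (slot_injective x).ne hab
  · exact h ▸ slot_ne_fst x a

lemma succAbove_castSucc_eq_slot (q a : Fin (n + 1)) :
    q.castSucc.succAbove a = slot (q.castSucc, q) a := by
  rw [slot_eq_add_succ]
  ext
  rcases lt_or_ge a q with h | h
  · simp only [Fin.succAbove_castSucc_of_lt _ _ h, Fin.val_add_eq_ite, Fin.val_succ,
      Fin.coe_sub_iff_lt.mpr h, Fin.val_castSucc]
    split_ifs <;> omega
  · simp only [Fin.succAbove_castSucc_of_le _ _ h, Fin.val_add_eq_ite, Fin.val_succ,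
      Fin.coe_sub_iff_le.mpr h, Fin.val_castSucc]
    split_ifs <;> omega

lemma succAbove_last_eq_slot (a : Fin (n + 1)) :
    (Fin.last (n + 1)).succAbove a = slot (Fin.last (n + 1), 0) a := by
  rw [slot, Fin.succAbove_last, Fin.last_add_one, zero_add, sub_zero]

lemma slot_step {y z : Fin (n + 2) × Fin (n + 1)} (hyz : z = y ∨ z = y - 1) (a : Fin (n + 1)) :
    slot z a = slot y a ∨ slot z a = slot y a + 1 := by
  rcases hyz with rfl | rfl
  · exact Or.inl rfl
  · exact (slot_sub_one y a).imp_right And.left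

lemma slot_ne_slot_of_step {y z : Fin (n + 2) × Fin (n + 1)} (hyz : z = y ∨ z = y - 1)
    {a b : Fin (n + 1)} (hab : a ≠ b) : slot y a ≠ slot z b := by
  rcases hyz with rfl | rfl
  · exact (slot_injective z).ne hab
  · exact slot_ne_slot_sub_one hab y

theorem exists_eq_slot_of_inCwCyclicOrder {s : Fin (n + 1) → Fin (n + 2)}
    (hs : InCwCyclicOrder (n + 2) (n + 1) s) : ∃ x, s = slot x := by
  obtain ⟨r, hr⟩ := hs
  obtain ⟨p, hp⟩ := Fin.exists_succAbove_eq_of_strictMono (g := fun a => s a + (r : Fin (n + 2)))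
    fun a b hab => Fin.lt_def.mpr (by simpa [Fin.val_add, Fin.val_natCast] using hr hab)
  obtain ⟨x, hx⟩ : ∃ x, p.succAbove = slot x := by
    induction p using Fin.lastCases with
    | last => exact ⟨_, funext succAbove_last_eq_slot⟩
    | cast q => exact ⟨_, funext (succAbove_castSucc_eq_slot q)⟩
  refine ⟨(x.1 - r, x.2), funext fun a => ?_⟩
  have := congrFun (hp.trans hx) a
  rw [slot] at this ⊢
  rw [eq_sub_of_add_eq this]
  ring

theorem exists_lt_eq_sub_natCast (x y : Fin (n + 2) × Fin (n + 1)) :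
    ∃ N < (n + 2) * (n + 1), y = x - N := by
  have hco : Nat.Coprime (n + 2) (n + 1) :=
    Nat.coprime_self_add_left.mpr (Nat.coprime_one_left _)
  let N := Nat.chineseRemainder hco (x - y).1 (x - y).2
  refine ⟨N.1, Nat.chineseRemainder_lt_mul hco _ _ (by omega) (by omega), ?_⟩
  have hN : (N.1 : Fin (n + 2) × Fin (n + 1)) = x - y := by
    ext
    · exact N.2.1.trans (Nat.mod_eq_of_lt (x - y).1.is_lt)
    · exact N.2.2.trans (Nat.mod_eq_of_lt (x - y).2.is_lt)
  rw [hN, sub_sub_cancel]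

lemma sub_natCast_min_succ {R : Type*} [AddCommGroupWithOne R] (x : R) (N ℓ : ℕ) :
    x - ((min (ℓ + 1) N : ℕ) : R) = x - (min ℓ N : ℕ) ∨
      x - ((min (ℓ + 1) N : ℕ) : R) = x - (min ℓ N : ℕ) - 1 := by
  rcases le_or_gt N ℓ with h | h
  · left; rw [min_eq_right h, min_eq_right (by omega)]
  · right; rw [min_eq_left h, min_eq_left (by omega), Nat.cast_succ]; abel

theorem exists_disjoint_paths_slot (x y : Fin (n + 2) × Fin (n + 1)) {m : ℕ}
    (hm : (n + 2) * (n + 1) ≤ m + 1) :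
    ∃ P : ∀ a, (cylGrid (n + 2) (m + 1)).Walk (slot x a, ⟨0, m.succ_pos⟩)
        (slot y a, ⟨m, m.lt_succ_self⟩),
      (∀ a, (P a).IsPath) ∧ ∀ a b, a ≠ b → ∀ v ∈ (P a).support, v ∉ (P b).support := by
  obtain ⟨N, hN, rfl⟩ := exists_lt_eq_sub_natCast x y
  obtain ⟨P, hP, hdisj⟩ := cylGrid.exists_disjoint_paths_of_schedules
    (fun a ℓ => slot (x - ((min ℓ N : ℕ) : Fin (n + 2) × Fin (n + 1))) a)
    (fun a ℓ => slot_step (sub_natCast_min_succ x N ℓ) a)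
    (fun ℓ => slot_injective _)
    (fun ℓ a b hab => slot_ne_slot_of_step (sub_natCast_min_succ x N ℓ) hab) (by omega : 0 < m + 1)
  have hNm : min m N = N := min_eq_right (by omega)
  refine ⟨fun a => (P a).copy (by simp only [Nat.zero_min, Nat.cast_zero, sub_zero])
    (by simp only [Nat.add_sub_cancel, hNm]), fun a => (Walk.isPath_copy _ _ _).mpr (hP a),
    fun a b hab v hva hvb => ?_⟩
  rw [Walk.support_copy] at hva hvb
  exact hdisj a b hab v hva hvb

end CylGridLinkage

/-- In `C_k^m` with `k ≥ 3` and `m ≥ k²`, if `s₁,…,s_{k-1}` lie in clockwise cyclic order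
on the innermost cycle and `t₁,…,t_{k-1}` in clockwise cyclic order on the outermost
cycle, then the pairs `(s_i,t_i)` are linked by pairwise vertex-disjoint paths. -/
theorem stmt7 (k m : ℕ) (hk : 3 ≤ k) (hm : k * k ≤ m)
    (s t : Fin (k - 1) → Fin k)
    (hcs : InCwCyclicOrder k (k - 1) s) (hct : InCwCyclicOrder k (k - 1) t) :
    ∃ P : ∀ a : Fin (k - 1),
        (cylGrid k m).Walk (s a, ⟨0, by have h9 := Nat.mul_le_mul hk hk; omega⟩)
          (t a, ⟨m - 1, by have h9 := Nat.mul_le_mul hk hk; omega⟩),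
      (∀ a, (P a).IsPath) ∧
        ∀ a b, a ≠ b → ∀ x, x ∈ (P a).support → x ∉ (P b).support := by
  obtain ⟨n, rfl⟩ : ∃ n, k = n + 2 := ⟨k - 2, by omega⟩
  obtain ⟨x, rfl⟩ := CylGridLinkage.exists_eq_slot_of_inCwCyclicOrder hcs
  obtain ⟨y, rfl⟩ := CylGridLinkage.exists_eq_slot_of_inCwCyclicOrder hct
  obtain ⟨m, rfl⟩ : ∃ m', m = m' + 1 := ⟨m - 1, by have := Nat.mul_le_mul hk hk; omega⟩
  exact CylGridLinkage.exists_disjoint_paths_slot x y (le_trans (by nlinarith) hm)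
end

section
/- Let I be a circle in the plane and X ⊆ I a finite set of k points. Then there exists a plane graph H on at most k² vertices, properly embedded in the closed disc bounded by I, with H ∩ I = X, such that every cross-free set of disjoint pairs 𝒯 ⊆ X² is realizable in H (i.e., admits a family of vertex-disjoint paths connecting each pair). Concretely, for k ≥ 3 the (k,k)-cylindrical grid with its outer cycle identified with X has this property. -/
open SimpleGraph

variable {V : Type}

/-- A drawing of the graph `G` in the plane (identified with `ℂ`): vertices are distinct
points and each edge is a simple curve between its endpoints; distinct edges meet only at
common endpoints, and the interior of an edge avoids all vertex points. -/
structure PlaneEmb (G : SimpleGraph V) where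
  pos : V → ℂ
  pos_inj : Function.Injective pos
  curve : (u v : V) → G.Adj u v → ℝ → ℂ
  curve_cont : ∀ u v h, ContinuousOn (curve u v h) (Set.Icc 0 1)
  curve_zero : ∀ u v h, curve u v h 0 = pos u
  curve_one : ∀ u v h, curve u v h 1 = pos v
  curve_injOn : ∀ u v h, Set.InjOn (curve u v h) (Set.Icc 0 1)
  curve_symm : ∀ u v (h : G.Adj u v) (t : ℝ), curve v u h.symm t = curve u v h (1 - t)
  curve_avoid : ∀ u v (h : G.Adj u v), ∀ t ∈ Set.Ioo (0:ℝ) 1, ∀ w, curve u v h t ≠ pos w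
  curve_disjoint : ∀ u v (h : G.Adj u v), ∀ u' v' (h' : G.Adj u' v'), s(u, v) ≠ s(u', v') →
    ∀ t ∈ Set.Ioo (0:ℝ) 1, ∀ t' ∈ Set.Ioo (0:ℝ) 1, curve u v h t ≠ curve u' v' h' t'

namespace PlaneEmb

variable {G : SimpleGraph V}

/-- The subset of the plane covered by the drawing of `G`. -/
def image (emb : PlaneEmb G) : Set ℂ :=
  Set.range emb.pos ∪ ⋃ (u : V) (v : V) (h : G.Adj u v), emb.curve u v h '' Set.Icc 0 1

/-- The subset of the plane covered by the drawing of a walk. -/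
def walkImage (emb : PlaneEmb G) {u v : V} (p : G.Walk u v) : Set ℂ :=
  {emb.pos u} ∪ ⋃ d ∈ p.darts, emb.curve d.toProd.1 d.toProd.2 d.adj '' Set.Icc 0 1

end PlaneEmb

/-- The disc of a subset `S` of the plane:  `S` together with all bounded connected
components of its complement. -/
def discOf (S : Set ℂ) : Set ℂ :=
  S ∪ {z | z ∉ S ∧ Bornology.IsBounded (connectedComponentIn Sᶜ z)}

/-- Four points on the unit circle appear in this cyclic order (witnessed by increasing
angles spanning less than a full turn). -/
def CyclicallyOrdered (z₁ z₂ z₃ z₄ : ℂ) : Prop :=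
  ∃ a₁ a₂ a₃ a₄ : ℝ, a₁ < a₂ ∧ a₂ < a₃ ∧ a₃ < a₄ ∧ a₄ < a₁ + 2 * Real.pi ∧
    z₁ = Complex.exp (Complex.I * (a₁ : ℂ)) ∧ z₂ = Complex.exp (Complex.I * (a₂ : ℂ)) ∧
    z₃ = Complex.exp (Complex.I * (a₃ : ℂ)) ∧ z₄ = Complex.exp (Complex.I * (a₄ : ℂ))

/-- The pairs in `T` (given as pairs of indices of the boundary points `x`) are pairwise
disjoint. -/
def DisjointPairsIdx {k : ℕ} (T : Finset (Fin k × Fin k)) : Prop :=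
  (∀ p ∈ T, p.1 ≠ p.2) ∧
    ∀ p ∈ T, ∀ q ∈ T, p ≠ q → p.1 ≠ q.1 ∧ p.1 ≠ q.2 ∧ p.2 ≠ q.1 ∧ p.2 ≠ q.2

/-- `T` is cross-free with respect to the boundary points `x`: no two of its pairs
interleave on the circle. -/
def CrossFree {k : ℕ} (x : Fin k → ℂ) (T : Finset (Fin k × Fin k)) : Prop :=
  ¬ ∃ p ∈ T, ∃ q ∈ T, p ≠ q ∧ CyclicallyOrdered (x p.1) (x q.1) (x p.2) (x q.2)

/-! Order the boundary points by argument and put them on the columns of a `k × k` grid drawn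
in polar coordinates: column `c` on the ray of angle `θ_c`, row `l` on the circle of radius
`1 - l / k`, row `0` being the boundary points themselves. This drawing is the image of an
axis-parallel straight-line grid under a map injective on the strip of angles `(-π, π]`, so it
is a plane drawing, and it meets the unit circle only in row `0`. A cross-free set of disjoint
pairs is a laminar family of column intervals; the pair spanning columns `a < b` is routed down
column `a`, along row `⌈(b - a) / 2⌉` and up column `b`. A pair nested in another spans at least
two columns fewer, hence runs strictly lower, and pairs with disjoint intervals use disjoint
columns, so the paths are vertex-disjoint. -/

open Complex Set Real AffineMap

theorem lineMap_mem_uIoo {x y t : ℝ} (hxy : x ≠ y) (ht : t ∈ Ioo (0 : ℝ) 1) :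
    lineMap x y t ∈ uIoo x y := by
  have := lineMap_mem_openSegment (𝕜 := ℝ) x y ht
  rwa [openSegment_eq_Ioo' hxy] at this

@[simp] theorem Complex.lineMap_re (z w : ℂ) (t : ℝ) :
    (lineMap z w t).re = lineMap z.re w.re t := by
  simp [lineMap_apply_module]

@[simp] theorem Complex.lineMap_im (z w : ℂ) (t : ℝ) :
    (lineMap z w t).im = lineMap z.im w.im t := by
  simp [lineMap_apply_module]

theorem Complex.exp_arg_mul_I {z : ℂ} (hz : ‖z‖ = 1) : exp (arg z * I) = z := by
  simpa [hz] using norm_mul_exp_arg_mul_I z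

theorem SimpleGraph.exists_isPath_of_injOn {G : SimpleGraph V} (f : ℕ → V) (m : ℕ)
    (hadj : ∀ i < m, G.Adj (f i) (f (i + 1))) (hinj : InjOn f (Iic m)) :
    ∃ p : G.Walk (f 0) (f m), p.IsPath ∧ ∀ w ∈ p.support, ∃ i ≤ m, f i = w := by
  have hne : (List.range (m + 1)).map f ≠ [] := by simp
  have hchain : ((List.range (m + 1)).map f).IsChain G.Adj :=
    (List.isChain_map f).2 ((List.isChain_range_succ _ m).2 hadj)
  refine ⟨(Walk.ofSupport _ hne hchain).copy (by simp) (by simp [List.getLast_map]), ?_, ?_⟩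
  · rw [Walk.isPath_copy, Walk.isPath_def, Walk.support_ofSupport]
    exact (List.nodup_range).map_on fun i hi j hj => hinj
      (Nat.lt_succ_iff.1 (List.mem_range.1 hi)) (Nat.lt_succ_iff.1 (List.mem_range.1 hj))
  · intro w hw
    simp only [Walk.support_copy, Walk.support_ofSupport, List.mem_map, List.mem_range] at hw
    obtain ⟨i, hi, rfl⟩ := hw
    exact ⟨i, Nat.lt_succ_iff.1 hi, rfl⟩

namespace PlaneEmb

variable {W : Type} {G : SimpleGraph V} {G' : SimpleGraph W} (emb : PlaneEmb G)

theorem pos_mem_image (u : V) : emb.pos u ∈ emb.image := Or.inl ⟨u, rfl⟩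

theorem curve_mem_image {u v : V} (h : G.Adj u v) {t : ℝ} (ht : t ∈ Icc (0 : ℝ) 1) :
    emb.curve u v h t ∈ emb.image :=
  Or.inr <| mem_iUnion₂.2 ⟨u, v, mem_iUnion.2 ⟨h, mem_image_of_mem _ ht⟩⟩

theorem mem_image_iff {z : ℂ} :
    z ∈ emb.image ↔ z ∈ range emb.pos ∨
      ∃ u v, ∃ h : G.Adj u v, ∃ t ∈ Ioo (0 : ℝ) 1, emb.curve u v h t = z := by
  refine ⟨?_, ?_⟩
  · rintro (hz | hz)
    · exact Or.inl hz
    simp only [mem_iUnion, mem_image] at hz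
    obtain ⟨u, v, h, t, ⟨ht0, ht1⟩, rfl⟩ := hz
    rcases ht0.eq_or_lt with rfl | ht0
    · exact Or.inl ⟨u, (emb.curve_zero u v h).symm⟩
    rcases ht1.eq_or_lt with rfl | ht1
    · exact Or.inl ⟨v, (emb.curve_one u v h).symm⟩
    exact Or.inr ⟨u, v, h, t, ⟨ht0, ht1⟩, rfl⟩
  · rintro (⟨u, rfl⟩ | ⟨u, v, h, t, ht, rfl⟩)
    · exact emb.pos_mem_image u
    · exact emb.curve_mem_image h (Ioo_subset_Icc_self ht)

def mapOfInjOn {f : ℂ → ℂ} {S : Set ℂ} (hS : emb.image ⊆ S) (hf : InjOn f S)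
    (hfc : ContinuousOn f S) : PlaneEmb G where
  pos := f ∘ emb.pos
  pos_inj _ _ h := emb.pos_inj <| hf (hS (emb.pos_mem_image _)) (hS (emb.pos_mem_image _)) h
  curve u v h := f ∘ emb.curve u v h
  curve_cont u v h := hfc.comp (emb.curve_cont u v h) fun _ ht => hS (emb.curve_mem_image h ht)
  curve_zero u v h := congrArg f (emb.curve_zero u v h)
  curve_one u v h := congrArg f (emb.curve_one u v h)
  curve_injOn u v h :=
    hf.comp (emb.curve_injOn u v h) fun _ ht => hS (emb.curve_mem_image h ht)
  curve_symm u v h t := congrArg f (emb.curve_symm u v h t)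
  curve_avoid u v h t ht w hfw :=
    emb.curve_avoid u v h t ht w <|
      hf (hS (emb.curve_mem_image h (Ioo_subset_Icc_self ht))) (hS (emb.pos_mem_image w)) hfw
  curve_disjoint u v h u' v' h' hne t ht t' ht' hfe :=
    emb.curve_disjoint u v h u' v' h' hne t ht t' ht' <|
      hf (hS (emb.curve_mem_image h (Ioo_subset_Icc_self ht)))
        (hS (emb.curve_mem_image h' (Ioo_subset_Icc_self ht'))) hfe

theorem image_mapOfInjOn {f : ℂ → ℂ} {S : Set ℂ} (hS : emb.image ⊆ S) (hf : InjOn f S)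
    (hfc : ContinuousOn f S) : (emb.mapOfInjOn hS hf hfc).image = f '' emb.image := by
  simp only [image, mapOfInjOn, image_union, image_iUnion, range_comp, image_comp]

def ofIso (e : G ≃g G') : PlaneEmb G' where
  pos := emb.pos ∘ e.symm
  pos_inj := emb.pos_inj.comp e.symm.injective
  curve u v h := emb.curve (e.symm u) (e.symm v) (e.symm.map_adj_iff.2 h)
  curve_cont _ _ _ := emb.curve_cont _ _ _
  curve_zero _ _ _ := emb.curve_zero _ _ _
  curve_one _ _ _ := emb.curve_one _ _ _
  curve_injOn _ _ _ := emb.curve_injOn _ _ _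
  curve_symm _ _ _ := emb.curve_symm _ _ _
  curve_avoid _ _ _ t ht w := emb.curve_avoid _ _ _ t ht (e.symm w)
  curve_disjoint u v h u' v' h' hne :=
    emb.curve_disjoint _ _ _ _ _ _ fun heq => hne <| by
      simpa using congrArg (Sym2.map e) heq

theorem image_ofIso (e : G ≃g G') : (emb.ofIso e).image = emb.image := by
  ext z
  simp only [mem_image_iff, ofIso, range_comp, e.symm.surjective.range_eq, image_univ]
  refine or_congr Iff.rfl ⟨fun ⟨u, v, h, t, ht, hz⟩ => ⟨_, _, _, t, ht, hz⟩, ?_⟩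
  rintro ⟨u, v, h, t, ht, rfl⟩
  exact ⟨e u, e v, e.map_adj_iff.2 h, t, ht, by simp⟩

end PlaneEmb

namespace StrictMono

variable {m : ℕ} {a : Fin m → ℝ} {c d c' d' : Fin m} {s : ℝ}

theorem lt_iff_and_lt_iff_of_mem_uIoo (ha : StrictMono a) (hcd : (pathGraph m).Adj c d)
    (hs : s ∈ uIoo (a c) (a d)) (i : Fin m) :
    (a i < s ↔ i ≤ min c d) ∧ (s < a i ↔ max c d ≤ i) := by
  wlog hlt : c < d generalizing c d
  · rw [min_comm, max_comm]
    exact this hcd.symm (uIoo_comm (a c) (a d) ▸ hs) (hcd.ne.symm.lt_of_le (not_lt.1 hlt))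
  have hsucc : (c : ℕ) + 1 = d := by
    rcases pathGraph_adj.1 hcd with h | h
    · exact h
    · exact absurd hlt (by rw [Fin.lt_def]; omega)
  rw [min_eq_left hlt.le, max_eq_right hlt.le]
  rw [uIoo_of_lt (ha hlt)] at hs
  have hi : i ≤ c ∨ d ≤ i := by rw [Fin.le_def, Fin.le_def]; omega
  rcases hi with hi | hi
  · have := ha.monotone hi
    exact ⟨iff_of_true (by linarith [hs.1]) hi,
      iff_of_false (by linarith [hs.1]) fun h => absurd (hi.trans_lt hlt) h.not_gt⟩
  · have := ha.monotone hi
    exact ⟨iff_of_false (by linarith [hs.2]) fun h => absurd (hlt.trans_le hi) h.not_gt,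
      iff_of_true (by linarith [hs.2]) hi⟩

theorem ne_of_mem_uIoo (ha : StrictMono a) (hcd : (pathGraph m).Adj c d)
    (hs : s ∈ uIoo (a c) (a d)) (i : Fin m) : a i ≠ s := by
  intro his
  have h := ha.lt_iff_and_lt_iff_of_mem_uIoo hcd hs i
  simp only [his, lt_self_iff_false, false_iff, not_le, Fin.lt_def, Fin.coe_min,
    Fin.coe_max] at h
  have := pathGraph_adj.1 hcd
  omega

theorem sym2_eq_of_mem_uIoo (ha : StrictMono a) (hcd : (pathGraph m).Adj c d)
    (hcd' : (pathGraph m).Adj c' d') (hs : s ∈ uIoo (a c) (a d))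
    (hs' : s ∈ uIoo (a c') (a d')) : s(c, d) = s(c', d') := by
  have key := ha.lt_iff_and_lt_iff_of_mem_uIoo hcd hs
  have key' := ha.lt_iff_and_lt_iff_of_mem_uIoo hcd' hs'
  have hmin : min c d = min c' d' :=
    le_antisymm ((key' _).1.1 ((key _).1.2 le_rfl)) ((key _).1.1 ((key' _).1.2 le_rfl))
  have hmax : max c d = max c' d' :=
    le_antisymm ((key _).2.1 ((key' _).2.2 le_rfl)) ((key' _).2.1 ((key _).2.2 le_rfl))
  exact Sym2.inf_eq_inf_and_sup_eq_sup.1 ⟨hmin, hmax⟩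

end StrictMono

section GridDrawing

variable {m n : ℕ} {a : Fin m → ℝ} {b : Fin n → ℝ}

def gridPoint (a : Fin m → ℝ) (b : Fin n → ℝ) (u : Fin m × Fin n) : ℂ := ⟨a u.1, b u.2⟩

theorem gridPoint_injective (ha : StrictMono a) (hb : StrictMono b) :
    Function.Injective (gridPoint a b) := fun _ _ h =>
  Prod.ext (ha.injective (congrArg re h)) (hb.injective (congrArg im h))

theorem lineMap_gridPoint_cases (ha : StrictMono a) (hb : StrictMono b) {u v : Fin m × Fin n}
    (huv : (pathGraph m □ pathGraph n).Adj u v) {t : ℝ} (ht : t ∈ Ioo (0 : ℝ) 1) :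
    ((pathGraph m).Adj u.1 v.1 ∧ u.2 = v.2 ∧
        (lineMap (gridPoint a b u) (gridPoint a b v) t).re ∈ uIoo (a u.1) (a v.1) ∧
        (lineMap (gridPoint a b u) (gridPoint a b v) t).im = b u.2) ∨
      ((pathGraph n).Adj u.2 v.2 ∧ u.1 = v.1 ∧
        (lineMap (gridPoint a b u) (gridPoint a b v) t).re = a u.1 ∧
        (lineMap (gridPoint a b u) (gridPoint a b v) t).im ∈ uIoo (b u.2) (b v.2)) := by
  simp only [Complex.lineMap_re, Complex.lineMap_im, gridPoint]
  rcases boxProd_adj.1 huv with ⟨h, he⟩ | ⟨h, he⟩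
  · refine Or.inl ⟨h, he, lineMap_mem_uIoo (ha.injective.ne h.ne) ht, ?_⟩
    rw [he, lineMap_same_apply]
  · refine Or.inr ⟨h, he, ?_, lineMap_mem_uIoo (hb.injective.ne h.ne) ht⟩
    rw [he, lineMap_same_apply]

variable {H : SimpleGraph (Fin m × Fin n)}

noncomputable def gridEmb (ha : StrictMono a) (hb : StrictMono b)
    (hH : H ≤ pathGraph m □ pathGraph n) : PlaneEmb H where
  pos := gridPoint a b
  pos_inj := gridPoint_injective ha hb
  curve u v _ := lineMap (gridPoint a b u) (gridPoint a b v)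
  curve_cont _ _ _ := lineMap_continuous.continuousOn
  curve_zero _ _ _ := lineMap_apply_zero _ _
  curve_one _ _ _ := lineMap_apply_one _ _
  curve_injOn _ _ h := (lineMap_injective ℝ ((gridPoint_injective ha hb).ne h.ne)).injOn
  curve_symm _ _ _ _ := (lineMap_apply_one_sub _ _ _).symm
  curve_avoid u v h t ht w hw := by
    rcases lineMap_gridPoint_cases ha hb (hH h) ht with ⟨hc, -, hre, -⟩ | ⟨hc, -, -, him⟩
    · exact ha.ne_of_mem_uIoo hc hre w.1 (congrArg re hw).symm
    · exact hb.ne_of_mem_uIoo hc him w.2 (congrArg im hw).symm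
  curve_disjoint u v h u' v' h' hne t ht t' ht' hz := by
    rcases lineMap_gridPoint_cases ha hb (hH h) ht with
      ⟨hc, hl, hre, him⟩ | ⟨hc, hl, hre, him⟩ <;>
    rcases lineMap_gridPoint_cases ha hb (hH h') ht' with
      ⟨hc', hl', hre', him'⟩ | ⟨hc', hl', hre', him'⟩ <;>
    rw [hz] at hre him
    · have hs := ha.sym2_eq_of_mem_uIoo hc hc' hre hre'
      have hl'' := hb.injective (him.symm.trans him')
      grind [Sym2.eq_iff, Prod.ext_iff]
    · exact ha.ne_of_mem_uIoo hc hre u'.1 hre'.symm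
    · exact ha.ne_of_mem_uIoo hc' hre' u.1 hre.symm
    · have hs := hb.sym2_eq_of_mem_uIoo hc hc' him him'
      have hl'' := ha.injective (hre.symm.trans hre')
      grind [Sym2.eq_iff, Prod.ext_iff]

theorem image_gridEmb_subset (ha : StrictMono a) (hb : StrictMono b)
    (hH : H ≤ pathGraph m □ pathGraph n) {S : Set ℂ} (hS : Convex ℝ S)
    (hpos : ∀ u, gridPoint a b u ∈ S) :
    (gridEmb ha hb hH).image ⊆ S := by
  simp only [PlaneEmb.image, union_subset_iff, range_subset_iff, iUnion_subset_iff,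
    image_subset_iff]
  exact ⟨hpos, fun u v _ _ ht => hS.lineMap_mem (hpos u) (hpos v) ht⟩

end GridDrawing

noncomputable def polarMap (z : ℂ) : ℂ := (1 - z.im : ℝ) * exp (z.re * I)

theorem continuous_polarMap : Continuous polarMap := by
  unfold polarMap; fun_prop

theorem norm_polarMap {z : ℂ} (hz : z.im ≤ 1) : ‖polarMap z‖ = 1 - z.im := by
  rw [polarMap, norm_mul, norm_exp_ofReal_mul_I, mul_one, norm_real, Real.norm_of_nonneg]
  linarith

theorem arg_polarMap {z : ℂ} (hz : z ∈ Ioc (-π) π ×ℂ Iio 1) : arg (polarMap z) = z.re := by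
  rw [polarMap, arg_real_mul _ (sub_pos.2 hz.2), exp_mul_I, arg_cos_add_sin_mul_I hz.1]

theorem injOn_polarMap : InjOn polarMap (Ioc (-π) π ×ℂ Iio 1) := by
  intro z hz w hw h
  refine Complex.ext ?_ ?_
  · rw [← arg_polarMap hz, ← arg_polarMap hw, h]
  · have := congrArg norm h
    rw [norm_polarMap hz.2.le, norm_polarMap hw.2.le] at this
    linarith

-- Row `0` lies on the boundary circle, so it carries no edges.
def combGrid (k : ℕ) : SimpleGraph (Fin k × Fin k) where
  Adj u v := (pathGraph k □ pathGraph k).Adj u v ∧ (u.2 = v.2 → (u.2 : ℕ) ≠ 0)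
  symm := ⟨fun _ _ h => ⟨h.1.symm, fun he => he ▸ h.2 he.symm⟩⟩
  loopless := ⟨fun _ h => h.1.ne rfl⟩

namespace combGrid

variable {k : ℕ}

theorem adj_iff {u v : Fin k × Fin k} :
    (combGrid k).Adj u v ↔ (pathGraph k □ pathGraph k).Adj u v ∧ (u.2 = v.2 → (u.2 : ℕ) ≠ 0) :=
  Iff.rfl

theorem le_boxProd : combGrid k ≤ pathGraph k □ pathGraph k := fun _ _ h => (adj_iff.1 h).1

def outer (c : Fin k) : Fin k × Fin k := (c, ⟨0, c.pos⟩)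

theorem strictMono_rowHeight : StrictMono fun l : Fin k => (l : ℝ) / k := fun i _ h =>
  div_lt_div_of_pos_right (Nat.cast_lt.2 h) (Nat.cast_pos.2 i.pos)

variable {θ : Fin k → ℝ}

theorem eq_outer_of_im_eq_zero (hθ : StrictMono θ) {w : ℂ}
    (hw : w ∈ (gridEmb hθ strictMono_rowHeight le_boxProd).image) (him : w.im = 0) :
    ∃ c, w = gridPoint θ (fun l : Fin k => (l : ℝ) / k) (outer c) := by
  have hpos : ∀ l : Fin k, (l : ℕ) ≠ 0 → 0 < (l : ℝ) / k := fun l hl =>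
    div_pos (Nat.cast_pos.2 (Nat.pos_of_ne_zero hl)) (Nat.cast_pos.2 l.pos)
  rcases (PlaneEmb.mem_image_iff _).1 hw with ⟨u, rfl⟩ | ⟨u, v, h, t, ht, rfl⟩
  · by_contra hne
    refine (hpos u.2 fun h0 => hne ⟨u.1, ?_⟩).ne' him
    simp [gridEmb, outer, ← h0]
  · exfalso
    rcases lineMap_gridPoint_cases hθ strictMono_rowHeight (le_boxProd h) ht with
      ⟨-, hl, -, him'⟩ | ⟨-, -, -, him'⟩
    · exact (hpos u.2 ((adj_iff.1 h).2 hl)).ne' (him'.symm.trans him)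
    · exact ((le_inf (by positivity) (by positivity)).trans_lt him'.1).ne' him

theorem image_gridEmb_subset_reProdIm (hθ : StrictMono θ) (hθπ : ∀ c, θ c ∈ Ioc (-π) π) :
    (gridEmb hθ strictMono_rowHeight le_boxProd).image ⊆ Ioc (-π) π ×ℂ Ico 0 1 := by
  refine image_gridEmb_subset _ _ _
    (((convex_Ioc _ _).linear_preimage reLm).inter ((convex_Ico _ _).linear_preimage imLm))
    fun u => ⟨hθπ u.1, div_nonneg (Nat.cast_nonneg _) (Nat.cast_nonneg _),
      (div_lt_one (Nat.cast_pos.2 u.2.pos)).2 ?_⟩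
  exact_mod_cast u.2.isLt

noncomputable def polarEmb (hθ : StrictMono θ) (hθπ : ∀ c, θ c ∈ Ioc (-π) π) :
    PlaneEmb (combGrid k) :=
  (gridEmb hθ strictMono_rowHeight le_boxProd).mapOfInjOn (image_gridEmb_subset_reProdIm hθ hθπ)
    (injOn_polarMap.mono (reProdIm_subset_iff.2 (prod_mono_right Ico_subset_Iio_self)))
    continuous_polarMap.continuousOn

theorem polarEmb_pos_outer (hθ : StrictMono θ) (hθπ : ∀ c, θ c ∈ Ioc (-π) π) (c : Fin k) :
    (polarEmb hθ hθπ).pos (outer c) = exp (θ c * I) := by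
  simp [polarEmb, PlaneEmb.mapOfInjOn, gridEmb, gridPoint, polarMap, outer]

theorem polarEmb_image_subset (hθ : StrictMono θ) (hθπ : ∀ c, θ c ∈ Ioc (-π) π) :
    (polarEmb hθ hθπ).image ⊆ {z : ℂ | ‖z‖ ≤ 1} := by
  rw [polarEmb, PlaneEmb.image_mapOfInjOn]
  rintro _ ⟨w, hw, rfl⟩
  have hw := image_gridEmb_subset_reProdIm hθ hθπ hw
  show ‖polarMap w‖ ≤ 1
  rw [norm_polarMap hw.2.2.le]
  linarith [hw.2.1]

theorem polarEmb_image_inter_circle (hθ : StrictMono θ) (hθπ : ∀ c, θ c ∈ Ioc (-π) π) :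
    {z ∈ (polarEmb hθ hθπ).image | ‖z‖ = 1} = range fun c => exp (θ c * I) := by
  ext z
  refine ⟨?_, ?_⟩
  · rintro ⟨hz, hz1⟩
    rw [polarEmb, PlaneEmb.image_mapOfInjOn] at hz
    obtain ⟨w, hw, rfl⟩ := hz
    rw [norm_polarMap (image_gridEmb_subset_reProdIm hθ hθπ hw).2.2.le] at hz1
    obtain ⟨c, rfl⟩ := eq_outer_of_im_eq_zero hθ hw (by linarith)
    exact ⟨c, (polarEmb_pos_outer hθ hθπ c).symm⟩
  · rintro ⟨c, rfl⟩
    refine ⟨?_, norm_exp_ofReal_mul_I _⟩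
    simpa only [polarEmb_pos_outer] using PlaneEmb.pos_mem_image (polarEmb hθ hθπ) (outer c)

theorem exists_hook_path {a b : Fin k} (hab : a ≠ b) {h : ℕ} (h0 : h ≠ 0) (hk : h < k) :
    ∃ w : (combGrid k).Walk (outer a) (outer b), w.IsPath ∧ ∀ z ∈ w.support,
      ((z.1 = a ∨ z.1 = b) ∧ (z.2 : ℕ) ≤ h) ∨
        (min a b ≤ z.1 ∧ z.1 ≤ max a b ∧ (z.2 : ℕ) = h) := by
  wlog hlt : a < b generalizing a b
  · obtain ⟨w, hw, hsupp⟩ := this hab.symm (hab.symm.lt_of_le (not_lt.1 hlt))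
    refine ⟨w.reverse, hw.reverse, fun z hz => ?_⟩
    rw [Walk.support_reverse, List.mem_reverse] at hz
    rw [min_comm, max_comm, or_comm (a := z.1 = a)]
    exact hsupp z hz
  have hab' : (a : ℕ) < b := hlt
  set m := 2 * h + (b - a)
  let f : ℕ → Fin k × Fin k := fun t =>
    (⟨(a + min (t - h) (b - a)) % k, Nat.mod_lt _ a.pos⟩,
      ⟨min h (min t (m - t)) % k, Nat.mod_lt _ a.pos⟩)
  have hf : ∀ t ≤ m, ((f t).1 : ℕ) = a + min (t - h) (b - a) ∧
      ((f t).2 : ℕ) = min h (min t (m - t)) := fun t ht =>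
    ⟨Nat.mod_eq_of_lt (by omega), Nat.mod_eq_of_lt (by omega)⟩
  have hadj : ∀ i < m, (combGrid k).Adj (f i) (f (i + 1)) := by
    intro i hi
    have := hf i hi.le
    have := hf (i + 1) hi
    simp only [adj_iff, boxProd_adj, pathGraph_adj, Fin.ext_iff]
    omega
  have hinj : InjOn f (Iic m) := by
    intro i (hi : i ≤ m) j (hj : j ≤ m) hij
    have := hf i hi
    have := hf j hj
    rw [Prod.ext_iff, Fin.ext_iff, Fin.ext_iff] at hij
    omega
  obtain ⟨w, hw, hsupp⟩ := exists_isPath_of_injOn f m hadj hinj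
  have h0' : f 0 = outer a := by
    have := hf 0 (Nat.zero_le _)
    simp only [outer, Prod.ext_iff, Fin.ext_iff]
    omega
  have hm : f m = outer b := by
    have := hf m le_rfl
    simp only [outer, Prod.ext_iff, Fin.ext_iff]
    omega
  refine ⟨w.copy h0' hm, by rwa [Walk.isPath_copy], fun z hz => ?_⟩
  rw [Walk.support_copy] at hz
  obtain ⟨i, hi, rfl⟩ := hsupp z hz
  have := hf i hi
  simp only [Fin.ext_iff, Fin.le_def, Fin.coe_min, Fin.coe_max]
  omega

theorem exists_disjoint_paths {ι : Type*} (T : Finset ι) (s t : ι → Fin k)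
    (hst : ∀ p ∈ T, s p ≠ t p)
    (hdisj : ∀ p ∈ T, ∀ q ∈ T, p ≠ q → s p ≠ s q ∧ s p ≠ t q ∧ t p ≠ s q ∧ t p ≠ t q)
    (hlam : ∀ p ∈ T, ∀ q ∈ T, ¬(min (s p) (t p) < min (s q) (t q) ∧
      min (s q) (t q) < max (s p) (t p) ∧ max (s p) (t p) < max (s q) (t q))) :
    ∃ P : ∀ p ∈ T, (combGrid k).Walk (outer (s p)) (outer (t p)), (∀ p hp, (P p hp).IsPath) ∧
      ∀ p hp q hq, p ≠ q → ∀ w, w ∈ (P p hp).support → w ∉ (P q hq).support := by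
  let height (p : ι) : ℕ := ((max (s p) (t p) : ℕ) - min (s p) (t p) + 1) / 2
  have hpath : ∀ p ∈ T, ∃ w : (combGrid k).Walk (outer (s p)) (outer (t p)), w.IsPath ∧
      ∀ z ∈ w.support, ((z.1 = s p ∨ z.1 = t p) ∧ (z.2 : ℕ) ≤ height p) ∨
        (min (s p) (t p) ≤ z.1 ∧ z.1 ≤ max (s p) (t p) ∧ (z.2 : ℕ) = height p) := by
    intro p hp
    have := (s p).isLt
    have := (t p).isLt
    have hne := Fin.val_ne_of_ne (hst p hp)
    refine exists_hook_path (hst p hp) ?_ ?_ <;>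
      simp only [height, Fin.coe_min] <;> omega
  choose P hP using hpath
  refine ⟨P, fun p hp => (hP p hp).1, fun p hp q hq hpq z hzp hzq => ?_⟩
  have hzp := (hP p hp).2 z hzp
  have hzq := (hP q hq).2 z hzq
  have hpq' := hdisj p hp q hq hpq
  have hlam₁ := hlam p hp q hq
  have hlam₂ := hlam q hq p hp
  simp only [height, Fin.ext_iff, Fin.lt_def, Fin.le_def, Fin.coe_min, Fin.coe_max, ne_eq]
    at hzp hzq hpq' hlam₁ hlam₂
  omega

end combGrid

namespace CyclicallyOrdered

theorem rotate {z₁ z₂ z₃ z₄ : ℂ} (h : CyclicallyOrdered z₁ z₂ z₃ z₄) :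
    CyclicallyOrdered z₂ z₃ z₄ z₁ := by
  obtain ⟨a₁, a₂, a₃, a₄, h₁₂, h₂₃, h₃₄, h₄₁, rfl, rfl, rfl, rfl⟩ := h
  refine ⟨a₂, a₃, a₄, a₁ + 2 * π, h₂₃, h₃₄, h₄₁, by linarith, rfl, rfl, rfl, ?_⟩
  rw [ofReal_add, mul_add, Complex.exp_add, ofReal_mul, ofReal_ofNat, mul_comm I (2 * (π : ℂ)),
    exp_two_pi_mul_I, mul_one]

theorem of_arg_lt {z₁ z₂ z₃ z₄ : ℂ} (h₁ : ‖z₁‖ = 1) (h₂ : ‖z₂‖ = 1) (h₃ : ‖z₃‖ = 1)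
    (h₄ : ‖z₄‖ = 1) (h₁₂ : arg z₁ < arg z₂) (h₂₃ : arg z₂ < arg z₃) (h₃₄ : arg z₃ < arg z₄) :
    CyclicallyOrdered z₁ z₂ z₃ z₄ := by
  refine ⟨_, _, _, _, h₁₂, h₂₃, h₃₄, ?_, ?_, ?_, ?_, ?_⟩
  · linarith [neg_pi_lt_arg z₁, arg_le_pi z₄]
  all_goals rw [mul_comm, exp_arg_mul_I ‹_›]

end CyclicallyOrdered

theorem CrossFree.not_interleaved {k : ℕ} {x : Fin k → ℂ} {T : Finset (Fin k × Fin k)}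
    (hT : CrossFree x T) (hcirc : ∀ i, ‖x i‖ = 1) {α : Type*} [LinearOrder α] {col : Fin k → α}
    (hcol : ∀ i j, col i < col j → arg (x i) < arg (x j)) {p q : Fin k × Fin k} (hp : p ∈ T)
    (hq : q ∈ T) : ¬(min (col p.1) (col p.2) < min (col q.1) (col q.2) ∧
      min (col q.1) (col q.2) < max (col p.1) (col p.2) ∧
      max (col p.1) (col p.2) < max (col q.1) (col q.2)) := by
  rintro ⟨h₁, h₂, h₃⟩
  obtain rfl | hpq := eq_or_ne p q
  · exact h₁.false
  have hCO := fun {i j l m} (hij : col i < col j) (hjl : col j < col l) (hlm : col l < col m) =>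
    CyclicallyOrdered.of_arg_lt (hcirc i) (hcirc j) (hcirc l) (hcirc m) (hcol _ _ hij)
      (hcol _ _ hjl) (hcol _ _ hlm)
  rcases le_total (col p.1) (col p.2) with hp' | hp' <;>
    rcases le_total (col q.1) (col q.2) with hq' | hq' <;>
    simp only [min_eq_left, min_eq_right, max_eq_left, max_eq_right, hp', hq'] at h₁ h₂ h₃
  · exact hT ⟨p, hp, q, hq, hpq, hCO h₁ h₂ h₃⟩
  · exact hT ⟨q, hq, p, hp, hpq.symm, (hCO h₁ h₂ h₃).rotate.rotate.rotate⟩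
  · exact hT ⟨q, hq, p, hp, hpq.symm, (hCO h₁ h₂ h₃).rotate⟩
  · exact hT ⟨p, hp, q, hq, hpq, (hCO h₁ h₂ h₃).rotate.rotate⟩

/-- Single-face gadget: for any `k` points `X` on the unit circle there is a plane graph
`H` on at most `k²` vertices, properly drawn in the closed unit disc with
`H ∩ circle = X`, in which every cross-free set of disjoint pairs of boundary points is
realizable by vertex-disjoint paths. -/
theorem stmt15 (k : ℕ) (x : Fin k → ℂ) (hx : Function.Injective x)
    (hcirc : ∀ i, ‖x i‖ = 1) :
    ∃ (n : ℕ) (_ : n ≤ k * k) (G : SimpleGraph (Fin n)) (emb : PlaneEmb G)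
      (bv : Fin k → Fin n),
      (∀ i, emb.pos (bv i) = x i) ∧
      emb.image ⊆ {z : ℂ | ‖z‖ ≤ 1} ∧
      {z ∈ emb.image | ‖z‖ = 1} = Set.range x ∧
      ∀ T : Finset (Fin k × Fin k), DisjointPairsIdx T → CrossFree x T →
        ∃ P : ∀ p ∈ T, G.Walk (bv p.1) (bv p.2),
          (∀ p hp, (P p hp).IsPath) ∧
          ∀ p hp q hq, p ≠ q → ∀ w, w ∈ (P p hp).support → w ∉ (P q hq).support := by
  set σ := Tuple.sort fun i => arg (x i)
  have hθ : StrictMono fun c => arg (x (σ c)) :=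
    (Tuple.monotone_sort fun i => arg (x i)).strictMono_of_injective fun c d h =>
      σ.injective (hx (ext_norm_arg (by rw [hcirc, hcirc]) h))
  have hθπ : ∀ c, arg (x (σ c)) ∈ Ioc (-π) π := fun _ => arg_mem_Ioc _
  let e := Iso.map finProdFinEquiv (combGrid k)
  let bv i := e (combGrid.outer (σ.symm i))
  refine ⟨k * k, le_rfl, _, (combGrid.polarEmb hθ hθπ).ofIso e, bv, fun i => ?_, ?_, ?_, ?_⟩
  · simp [bv, PlaneEmb.ofIso, combGrid.polarEmb_pos_outer, exp_arg_mul_I (hcirc i)]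
  · simpa only [PlaneEmb.image_ofIso] using combGrid.polarEmb_image_subset hθ hθπ
  · rw [PlaneEmb.image_ofIso, combGrid.polarEmb_image_inter_circle,
      show (fun c => exp (arg (x (σ c)) * I)) = x ∘ σ from funext fun _ => exp_arg_mul_I (hcirc _),
      σ.surjective.range_comp]
  · intro T hT hcf
    have hcol : ∀ i j, σ.symm i < σ.symm j → arg (x i) < arg (x j) := fun i j h => by
      simpa using hθ h
    obtain ⟨P, hP, hdisj⟩ := combGrid.exists_disjoint_paths T (fun p => σ.symm p.1)
      (fun p => σ.symm p.2) (fun p hp h => hT.1 p hp (σ.symm.injective h))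
      (fun p hp q hq hpq => by simpa using hT.2 p hp q hq hpq)
      (fun p hp q hq => hcf.not_interleaved hcirc hcol hp hq)
    refine ⟨fun p hp => (P p hp).map e.toHom, fun p hp => (hP p hp).map e.injective, ?_⟩
    intro p hp q hq hpq w hwp hwq
    simp only [Walk.support_map, List.mem_map] at hwp hwq
    obtain ⟨z, hz, rfl⟩ := hwp
    obtain ⟨z', hz', hzz'⟩ := hwq
    exact hdisj p hp q hq hpq z hz (e.injective hzz' ▸ hz')
end
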